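/- arXiv:2402.04689 — 9 statements merged into one kernel-verified Lean document; each statement's English description precedes it below -/
import Mathlib

section
/- Suppose the set of global minimizers has Lebesgue measure zero, i.e. λ(X*) = 0. Then, as κ → ∞, the Boltzmann density diverges on the minimizers and vanishes elsewhere: for every x ∈ X*, m^(κ)(x) → ∞, and for every x ∈ Ω \ X*, m^(κ)(x) → 0. -/
open MeasureTheory Filter Topology

/-!
Writing `m κ x = exp (-κ (f x - f*)) / Z κ` with `Z κ = ∫_Ω exp (-κ (f - f*))`, the integrand of
`Z` tends to `0` wherever `f > f*`, i.e. almost everywhere on `Ω`, so `Z κ → 0` by dominated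
convergence and `m κ x = 1 / Z κ → ∞` on `X*`. Conversely, a minimizer lies in the closure of
the interior of `Ω`, so `f < f* + ε` on a nonempty open subset of `Ω` and `Z κ ≥ c e^{-κε}`;
taking `ε = (f x - f*) / 2` gives `m κ x ≤ c⁻¹ e^{-κε} → 0` off `X*`.
-/

theorem tendsto_exp_neg_mul_atTop_nhds_zero {a : ℝ} (ha : 0 < a) :
    Tendsto (fun κ : ℝ => Real.exp (-κ * a)) atTop (𝓝 0) := by
  simpa only [Function.comp_def, id, neg_mul] using
    Real.tendsto_exp_neg_atTop_nhds_zero.comp (tendsto_id.atTop_mul_const ha)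

theorem tendsto_integral_exp_neg_mul_atTop_nhds_zero {α : Type*} [MeasurableSpace α]
    {μ : Measure α} [IsFiniteMeasure μ] {g : α → ℝ} (hg : AEMeasurable g μ)
    (hpos : ∀ᵐ x ∂μ, 0 < g x) :
    Tendsto (fun κ : ℝ => ∫ x, Real.exp (-κ * g x) ∂μ) atTop (𝓝 0) := by
  have hmeas (κ : ℝ) : AEStronglyMeasurable (fun x => Real.exp (-κ * g x)) μ :=
    (Real.measurable_exp.comp_aemeasurable (hg.const_mul (-κ))).aestronglyMeasurable
  have hle_one : ∀ᶠ κ in atTop, ∀ᵐ x ∂μ, ‖Real.exp (-κ * g x)‖ ≤ 1 := by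
    filter_upwards [eventually_ge_atTop 0] with κ hκ
    filter_upwards [hpos] with x hx
    rw [Real.norm_of_nonneg (Real.exp_pos _).le, Real.exp_le_one_iff]
    nlinarith
  simpa using tendsto_integral_filter_of_dominated_convergence (fun _ => 1)
    (Eventually.of_forall hmeas) hle_one (integrable_const 1)
    (hpos.mono fun x hx => tendsto_exp_neg_mul_atTop_nhds_zero hx)

theorem exists_isOpen_subset_lt_of_mem_closure_interior {X : Type*} [TopologicalSpace X]
    {s : Set X} {f : X → ℝ} {x₀ : X} {b : ℝ} (hx₀ : x₀ ∈ closure (interior s))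
    (hf : ContinuousWithinAt f s x₀) (hb : f x₀ < b) :
    ∃ U, IsOpen U ∧ U.Nonempty ∧ U ⊆ s ∧ ∀ t ∈ U, f t < b := by
  obtain ⟨V, hVo, hx₀V, hV⟩ := mem_nhdsWithin.1 (hf (Iio_mem_nhds hb))
  obtain ⟨y, hyV, hys⟩ := _root_.mem_closure_iff.1 hx₀ V hVo hx₀V
  exact ⟨V ∩ interior s, hVo.inter isOpen_interior, ⟨y, hyV, hys⟩,
    fun t ht => interior_subset ht.2, fun t ht => hV ⟨ht.1, interior_subset ht.2⟩⟩

theorem exists_pos_mul_exp_le_setIntegral_exp {X : Type*} [TopologicalSpace X] [T2Space X]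
    [MeasurableSpace X] [OpensMeasurableSpace X] {μ : Measure X} [IsFiniteMeasureOnCompacts μ]
    [μ.IsOpenPosMeasure] {s : Set X} {f : X → ℝ} {x₀ : X} {b : ℝ} (hs : IsCompact s)
    (hf : ContinuousOn f s) (hx₀s : x₀ ∈ s) (hx₀ : x₀ ∈ closure (interior s)) (hb : f x₀ < b) :
    ∃ c > 0, ∀ κ ≥ 0, c * Real.exp (-κ * b) ≤ ∫ t in s, Real.exp (-κ * f t) ∂μ := by
  obtain ⟨U, hUo, hUne, hUs, hfU⟩ :=
    exists_isOpen_subset_lt_of_mem_closure_interior hx₀ (hf x₀ hx₀s) hb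
  have hμU : μ U ≠ ⊤ := (measure_mono hUs).trans_lt hs.measure_lt_top |>.ne
  refine ⟨μ.real U, ENNReal.toReal_pos (hUo.measure_pos μ hUne).ne' hμU, fun κ hκ => ?_⟩
  have hint : IntegrableOn (fun t => Real.exp (-κ * f t)) s μ :=
    (Real.continuous_exp.comp_continuousOn (hf.const_smul (-κ))).integrableOn_compact hs
  calc μ.real U * Real.exp (-κ * b)
      ≤ ∫ t in U, Real.exp (-κ * f t) ∂μ := by
        rw [mul_comm]
        refine setIntegral_ge_of_const_le_real hUo.measurableSet hμU (fun t ht => ?_)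
          (hint.mono_set hUs)
        exact Real.exp_le_exp.2 (by nlinarith [hfU t ht])
    _ ≤ ∫ t in s, Real.exp (-κ * f t) ∂μ :=
        setIntegral_mono_set hint (ae_of_all _ fun t => (Real.exp_pos _).le) hUs.eventuallyLE

theorem exp_neg_mul_div_integral_eq_sub {α : Type*} [MeasurableSpace α] (μ : Measure α)
    (f : α → ℝ) (a c κ : ℝ) :
    Real.exp (-κ * a) / ∫ t, Real.exp (-κ * f t) ∂μ =
      Real.exp (-κ * (a - c)) / ∫ t, Real.exp (-κ * (f t - c)) ∂μ := by
  have hsplit (y : ℝ) : Real.exp (-κ * y) = Real.exp (-κ * c) * Real.exp (-κ * (y - c)) := by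
    rw [← Real.exp_add]; ring_nf
  rw [hsplit a, funext fun t => hsplit (f t), integral_const_mul]
  exact mul_div_mul_left _ _ (Real.exp_ne_zero _)

theorem tendsto_exp_neg_mul_div_atTop_nhds_zero {Z : ℝ → ℝ} {δ c : ℝ} (hδ : 0 < δ) (hc : 0 < c)
    (hZ : ∀ κ ≥ 0, c * Real.exp (-κ * (δ / 2)) ≤ Z κ) :
    Tendsto (fun κ => Real.exp (-κ * δ) / Z κ) atTop (𝓝 0) := by
  have hlim := (tendsto_exp_neg_mul_atTop_nhds_zero (half_pos hδ)).const_mul c⁻¹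
  rw [mul_zero] at hlim
  refine squeeze_zero' ?_ ?_ hlim
  · filter_upwards [eventually_ge_atTop 0] with κ hκ
    exact div_nonneg (Real.exp_pos _).le ((by positivity : (0:ℝ) ≤ _).trans (hZ κ hκ))
  · filter_upwards [eventually_ge_atTop 0] with κ hκ
    calc Real.exp (-κ * δ) / Z κ
        ≤ Real.exp (-κ * δ) / (c * Real.exp (-κ * (δ / 2))) :=
          div_le_div_of_nonneg_left (Real.exp_pos _).le (by positivity) (hZ κ hκ)
      _ = c⁻¹ * Real.exp (-κ * (δ / 2)) := by
          rw [show -κ * δ = -κ * (δ / 2) + -κ * (δ / 2) by ring, Real.exp_add]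
          field_simp

theorem boltzmann_density_limit_of_measure_zero_general
    (d : ℕ)
    (Ω : Set (EuclideanSpace ℝ (Fin d)))
    (hΩc : IsCompact Ω)
    (hΩcl : Ω = closure (interior Ω))
    (f : EuclideanSpace ℝ (Fin d) → ℝ)
    (hf : ContinuousOn f Ω)
    (fstar : ℝ) (hmin : IsLeast (f '' Ω) fstar)
    (m : ℝ → EuclideanSpace ℝ (Fin d) → ℝ)
    (hm : ∀ κ x, m κ x = Real.exp (-κ * f x) / ∫ t in Ω, Real.exp (-κ * f t))
    (hX0 : volume {x | x ∈ Ω ∧ f x = fstar} = 0) :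
    (∀ x ∈ {x | x ∈ Ω ∧ f x = fstar}, Tendsto (fun κ : ℝ => m κ x) atTop atTop) ∧
    (∀ x ∈ Ω \ {x | x ∈ Ω ∧ f x = fstar}, Tendsto (fun κ : ℝ => m κ x) atTop (𝓝 0)) := by
  obtain ⟨x₀, hx₀Ω, hfx₀⟩ := hmin.1
  have hf_gt : ∀ x ∈ Ω, x ∉ {x | x ∈ Ω ∧ f x = fstar} → 0 < f x - fstar := fun x hx hne =>
    sub_pos.2 ((hmin.2 ⟨x, hx, rfl⟩).lt_of_ne fun h => hne ⟨hx, h.symm⟩)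
  have hf_sub : ContinuousOn (fun t => f t - fstar) Ω := hf.sub continuousOn_const
  set Z : ℝ → ℝ := fun κ => ∫ t in Ω, Real.exp (-κ * (f t - fstar))
  have hm' (κ x) : m κ x = Real.exp (-κ * (f x - fstar)) / Z κ := by
    rw [hm]; exact exp_neg_mul_div_integral_eq_sub _ _ _ _ _
  have hZ_lower : ∀ ε > 0, ∃ c > 0, ∀ κ ≥ 0, c * Real.exp (-κ * ε) ≤ Z κ := fun ε hε =>
    exists_pos_mul_exp_le_setIntegral_exp hΩc hf_sub hx₀Ω (hΩcl ▸ hx₀Ω) (by simpa [hfx₀])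
  have hZ_tendsto : Tendsto Z atTop (𝓝 0) := by
    have : IsFiniteMeasure (volume.restrict Ω) := isFiniteMeasure_restrict.2 hΩc.measure_ne_top
    refine tendsto_integral_exp_neg_mul_atTop_nhds_zero
      (hf_sub.aemeasurable hΩc.measurableSet) ?_
    filter_upwards [ae_restrict_mem hΩc.measurableSet,
      ae_restrict_of_ae (measure_eq_zero_iff_ae_notMem.1 hX0)] with t ht hnot
    exact hf_gt t ht hnot
  constructor
  · rintro x ⟨-, hfx⟩
    obtain ⟨c, hc, hlow⟩ := hZ_lower 1 one_pos
    have hZ_pos : ∀ᶠ κ in atTop, Z κ ∈ Set.Ioi 0 := by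
      filter_upwards [eventually_ge_atTop 0] with κ hκ
      exact (by positivity : (0:ℝ) < _).trans_le (hlow κ hκ)
    refine (tendsto_nhdsWithin_of_tendsto_nhds_of_eventually_within _ hZ_tendsto
      hZ_pos).inv_tendsto_nhdsGT_zero.congr fun κ => ?_
    simp [hm', hfx]
  · rintro x ⟨hxΩ, hx⟩
    have hδ := hf_gt x hxΩ hx
    obtain ⟨c, hc, hlow⟩ := hZ_lower _ (half_pos hδ)
    simpa only [hm'] using tendsto_exp_neg_mul_div_atTop_nhds_zero hδ hc hlow

/-- If the set of global minimizers `X* = {x ∈ Ω | f x = f*}` has Lebesgue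
measure zero, then as `κ → ∞` the Boltzmann density `m^(κ)` diverges on `X*` and tends
to `0` on `Ω \ X*`. -/
theorem boltzmann_density_limit_of_measure_zero
    (d : ℕ) (hd : 1 ≤ d)
    (Ω : Set (EuclideanSpace ℝ (Fin d)))
    (hΩc : IsCompact Ω)
    (hΩcl : Ω = closure (interior Ω))
    (hΩint : (interior Ω).Nonempty)
    (f : EuclideanSpace ℝ (Fin d) → ℝ)
    (hf : ContinuousOn f Ω)
    (fstar : ℝ) (hmin : IsLeast (f '' Ω) fstar)
    (m : ℝ → EuclideanSpace ℝ (Fin d) → ℝ)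
    (hm : ∀ κ x, m κ x = Real.exp (-κ * f x) / ∫ t in Ω, Real.exp (-κ * f t))
    (hX0 : volume {x | x ∈ Ω ∧ f x = fstar} = 0) :
    (∀ x ∈ {x | x ∈ Ω ∧ f x = fstar}, Tendsto (fun κ : ℝ => m κ x) atTop atTop) ∧
    (∀ x ∈ Ω \ {x | x ∈ Ω ∧ f x = fstar}, Tendsto (fun κ : ℝ => m κ x) atTop (𝓝 0)) :=
  boltzmann_density_limit_of_measure_zero_general d Ω hΩc hΩcl f hf fstar hmin m hm hX0
end

section
/- Suppose the set of global minimizers has positive Lebesgue measure, i.e. λ(X*) > 0. Then, as κ → ∞, the Boltzmann density converges pointwise to the uniform density on the minimizers: for every x ∈ X*, m^(κ)(x) → λ(X*)^{-1}, and for every x ∈ Ω \ X*, m^(κ)(x) → 0. -/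
/-! Subtracting the minimum value `c` from `f` multiplies numerator and denominator of the
Boltzmann density by the same factor `exp (κ c)`. After this shift the weight `exp (-κ (f t - c))`
is bounded by `1` on the domain and tends to the indicator of the minimizers, so by dominated
convergence the shifted partition function tends to the measure of the minimizers, which is
positive by assumption. -/

open MeasureTheory Filter Topology Real
open scoped ENNReal

lemma tendsto_exp_neg_mul_atTop_of_pos {a : ℝ} (ha : 0 < a) :
    Tendsto (fun κ : ℝ => exp (-κ * a)) atTop (𝓝 0) := by
  refine tendsto_exp_atBot.comp ?_
  simpa only [neg_mul, Function.comp_def, id] using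
    tendsto_neg_atTop_atBot.comp (tendsto_id.atTop_mul_const ha)

lemma tendsto_exp_neg_mul_sub_indicator {α : Type*} {f : α → ℝ} {c : ℝ} {t : α}
    (hc : c ≤ f t) :
    Tendsto (fun κ : ℝ => exp (-κ * (f t - c))) atTop (𝓝 ({t | f t = c}.indicator 1 t)) := by
  rcases hc.eq_or_lt with h | h
  · simp [← h]
  · rw [Set.indicator_of_notMem (show t ∉ {t | f t = c} from h.ne')]
    exact tendsto_exp_neg_mul_atTop_of_pos (sub_pos.mpr h)

section

variable {α : Type*} [MeasurableSpace α] {μ : Measure α} {s : Set α} {f : α → ℝ} {c : ℝ}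

lemma tendsto_setIntegral_exp_neg_mul_sub (hs : MeasurableSet s) (hμs : μ s ≠ ∞)
    (hf : AEStronglyMeasurable f (μ.restrict s)) (hc : ∀ t ∈ s, c ≤ f t) :
    Tendsto (fun κ : ℝ => ∫ t in s, exp (-κ * (f t - c)) ∂μ) atTop
      (𝓝 (μ.real ({t | f t = c} ∩ s))) := by
  have hmeas : NullMeasurableSet {t | f t = c} (μ.restrict s) :=
    hf.nullMeasurableSet_eq_fun aestronglyMeasurable_const
  have hlim : ∫ t in s, {t | f t = c}.indicator 1 t ∂μ = μ.real ({t | f t = c} ∩ s) := by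
    rw [integral_indicator₀ hmeas, Pi.one_def, setIntegral_const, smul_eq_mul, mul_one,
      measureReal_restrict_apply₀ hmeas]
  rw [← hlim]
  refine tendsto_integral_filter_of_dominated_convergence (fun _ => 1)
    (Eventually.of_forall fun κ => ?_) ?_ (integrableOn_const hμs) ?_
  · exact continuous_exp.comp_aestronglyMeasurable
      ((hf.sub aestronglyMeasurable_const).const_mul _)
  · filter_upwards [eventually_ge_atTop 0] with κ hκ
    refine ae_restrict_of_forall_mem hs fun t ht => ?_
    rw [norm_of_nonneg (exp_pos _).le, exp_le_one_iff]
    exact mul_nonpos_of_nonpos_of_nonneg (neg_nonpos.mpr hκ) (sub_nonneg.mpr (hc t ht))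
  · exact ae_restrict_of_forall_mem hs fun t ht => tendsto_exp_neg_mul_sub_indicator (hc t ht)

lemma exp_neg_mul_div_setIntegral_eq (κ c : ℝ) (x : α) :
    exp (-κ * f x) / ∫ t in s, exp (-κ * f t) ∂μ
      = exp (-κ * (f x - c)) / ∫ t in s, exp (-κ * (f t - c)) ∂μ := by
  have hshift : ∀ y, exp (-κ * (f y - c)) = exp (κ * c) * exp (-κ * f y) := fun y => by
    rw [← exp_add]; ring_nf
  simp only [hshift, integral_const_mul, mul_div_mul_left _ _ (exp_ne_zero _)]

lemma tendsto_exp_neg_mul_div_setIntegral (hs : MeasurableSet s) (hμs : μ s ≠ ∞)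
    (hf : AEStronglyMeasurable f (μ.restrict s)) (hc : ∀ t ∈ s, c ≤ f t)
    (hpos : μ.real ({t | f t = c} ∩ s) ≠ 0) {x : α} (hx : c ≤ f x) :
    Tendsto (fun κ : ℝ => exp (-κ * f x) / ∫ t in s, exp (-κ * f t) ∂μ) atTop
      (𝓝 ({t | f t = c}.indicator 1 x / μ.real ({t | f t = c} ∩ s))) := by
  simp only [exp_neg_mul_div_setIntegral_eq _ c x]
  exact (tendsto_exp_neg_mul_sub_indicator hx).div
    (tendsto_setIntegral_exp_neg_mul_sub hs hμs hf hc) hpos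

end

theorem boltzmann_density_limit_of_measure_pos_general
    (d : ℕ)
    (Ω : Set (EuclideanSpace ℝ (Fin d)))
    (hΩc : IsCompact Ω)
    (f : EuclideanSpace ℝ (Fin d) → ℝ)
    (hf : ContinuousOn f Ω)
    (fstar : ℝ) (hmin : IsLeast (f '' Ω) fstar)
    (m : ℝ → EuclideanSpace ℝ (Fin d) → ℝ)
    (hm : ∀ κ x, m κ x = Real.exp (-κ * f x) / ∫ t in Ω, Real.exp (-κ * f t))
    (hXpos : 0 < volume {x | x ∈ Ω ∧ f x = fstar}) :
    (∀ x ∈ {x | x ∈ Ω ∧ f x = fstar},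
      Tendsto (fun κ : ℝ => m κ x) atTop
        (𝓝 ((volume {x | x ∈ Ω ∧ f x = fstar}).toReal⁻¹))) ∧
    (∀ x ∈ Ω \ {x | x ∈ Ω ∧ f x = fstar}, Tendsto (fun κ : ℝ => m κ x) atTop (𝓝 0)) := by
  have hX : {x | x ∈ Ω ∧ f x = fstar} = {t | f t = fstar} ∩ Ω := Set.ext fun _ => and_comm
  have hle : ∀ t ∈ Ω, fstar ≤ f t := fun t ht => hmin.2 ⟨t, ht, rfl⟩
  have hvol : volume.real ({t | f t = fstar} ∩ Ω) ≠ 0 := by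
    rw [← hX]
    exact (ENNReal.toReal_pos hXpos.ne'
      ((measure_mono fun _ hx => hx.1).trans_lt hΩc.measure_lt_top).ne).ne'
  have hlim : ∀ x ∈ Ω, Tendsto (fun κ : ℝ => m κ x) atTop
      (𝓝 ({t | f t = fstar}.indicator 1 x / volume.real ({t | f t = fstar} ∩ Ω))) := by
    intro x hx
    simp only [hm]
    exact tendsto_exp_neg_mul_div_setIntegral hΩc.isClosed.measurableSet
      hΩc.measure_lt_top.ne (hf.aestronglyMeasurable hΩc.isClosed.measurableSet) hle hvol
      (hle x hx)
  refine ⟨fun x hx => ?_, fun x hx => ?_⟩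
  · simpa [Set.indicator_of_mem (show x ∈ {t | f t = fstar} from hx.2), ← hX, Measure.real]
      using hlim x hx.1
  · simpa [Set.indicator_of_notMem (show x ∉ {t | f t = fstar} from fun h => hx.2 ⟨hx.1, h⟩)]
      using hlim x hx.1

/-- If the set of global minimizers `X* = {x ∈ Ω | f x = f*}` has positive
Lebesgue measure, then as `κ → ∞` the Boltzmann density `m^(κ)` converges pointwise to
`λ(X*)⁻¹` on `X*` and to `0` on `Ω \ X*`. -/
theorem boltzmann_density_limit_of_measure_pos
    (d : ℕ) (hd : 1 ≤ d)
    (Ω : Set (EuclideanSpace ℝ (Fin d)))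
    (hΩc : IsCompact Ω)
    (hΩcl : Ω = closure (interior Ω))
    (hΩint : (interior Ω).Nonempty)
    (f : EuclideanSpace ℝ (Fin d) → ℝ)
    (hf : ContinuousOn f Ω)
    (fstar : ℝ) (hmin : IsLeast (f '' Ω) fstar)
    (m : ℝ → EuclideanSpace ℝ (Fin d) → ℝ)
    (hm : ∀ κ x, m κ x = Real.exp (-κ * f x) / ∫ t in Ω, Real.exp (-κ * f t))
    (hXpos : 0 < volume {x | x ∈ Ω ∧ f x = fstar}) :
    (∀ x ∈ {x | x ∈ Ω ∧ f x = fstar},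
      Tendsto (fun κ : ℝ => m κ x) atTop
        (𝓝 ((volume {x | x ∈ Ω ∧ f x = fstar}).toReal⁻¹))) ∧
    (∀ x ∈ Ω \ {x | x ∈ Ω ∧ f x = fstar}, Tendsto (fun κ : ℝ => m κ x) atTop (𝓝 0)) :=
  boltzmann_density_limit_of_measure_pos_general d Ω hΩc f hf fstar hmin m hm hXpos
end

section
/- The expectation of f under the Boltzmann density converges to the global minimum value: lim_{κ → ∞} ∫_Ω f(x) m^(κ)(x) dx = f*. -/
/-!
Under the weights `e^{-κ f}` the set `{f ≥ f* + ε}` carries mass at most `e^{-κ (f* + ε)} |Ω|`,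
while `{f < f* + ε/2}` carries mass at least `e^{-κ (f* + ε/2)}` times its measure, which is
positive because `f` is continuous at a minimiser lying in the closure of the interior of `Ω`.
So the relative weight of `{f ≥ f* + ε}` decays like `e^{-κ ε/2}`, and the Boltzmann mean of `f`
is eventually within `2ε` of `f*`.
-/

open MeasureTheory Filter Topology Real Set

theorem sub_mul_exp_neg_mul_le {κ ε c M y : ℝ} (hκ : 0 ≤ κ) (hε : 0 ≤ ε) (hcy : c ≤ y)
    (hyM : y ≤ M) :
    (y - c) * exp (-κ * y) ≤ ε * exp (-κ * y) + (M - c) * exp (-κ * (c + ε)) := by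
  rcases le_or_gt (y - c) ε with hy | hy
  · calc (y - c) * exp (-κ * y) ≤ ε * exp (-κ * y) := by gcongr
      _ ≤ _ := le_add_of_nonneg_right (mul_nonneg (by linarith) (exp_pos _).le)
  · have hexp : exp (-κ * y) ≤ exp (-κ * (c + ε)) := exp_le_exp.2 (by nlinarith)
    calc (y - c) * exp (-κ * y) ≤ (M - c) * exp (-κ * (c + ε)) := by gcongr; linarith
      _ ≤ _ := le_add_of_nonneg_left (by positivity)

theorem measure_restrict_pos_of_mem_nhdsWithin {X : Type*} [TopologicalSpace X]
    [MeasurableSpace X] {μ : Measure X} [μ.IsOpenPosMeasure] {s t : Set X} {x : X}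
    (hs : s ⊆ closure (interior s)) (hx : x ∈ s) (ht : t ∈ 𝓝[s] x) : 0 < μ.restrict s t := by
  obtain ⟨u, hu, hxu, hut⟩ := mem_nhdsWithin.1 ht
  have hne : (u ∩ interior s).Nonempty := _root_.mem_closure_iff.1 (hs hx) u hu hxu
  calc 0 < μ (u ∩ interior s) := (hu.inter isOpen_interior).measure_pos μ hne
    _ ≤ μ (t ∩ s) := measure_mono fun y hy =>
      ⟨hut ⟨hy.1, interior_subset hy.2⟩, interior_subset hy.2⟩
    _ ≤ μ.restrict s t := Measure.le_restrict_apply s t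

noncomputable def boltzmannMean {α : Type*} [MeasurableSpace α] (μ : Measure α) (f : α → ℝ)
    (κ : ℝ) : ℝ :=
  (∫ x, f x * exp (-κ * f x) ∂μ) / ∫ x, exp (-κ * f x) ∂μ

section Boltzmann

variable {α : Type*} [MeasurableSpace α] {μ : Measure α} [IsFiniteMeasure μ] {f : α → ℝ}
  {κ c M : ℝ}

theorem integrable_exp_neg_mul (hf : AEStronglyMeasurable f μ) (hc : ∀ᵐ x ∂μ, c ≤ f x)
    (hκ : 0 ≤ κ) : Integrable (fun x => exp (-κ * f x)) μ :=
  Integrable.of_bound (by fun_prop) (exp (-κ * c)) <| hc.mono fun x hx => by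
    rw [Real.norm_of_nonneg (exp_pos _).le]
    exact exp_le_exp.2 (by nlinarith)

theorem integrable_sub_mul_exp_neg_mul (hf : AEStronglyMeasurable f μ) (hc : ∀ᵐ x ∂μ, c ≤ f x)
    (hM : ∀ᵐ x ∂μ, f x ≤ M) (hκ : 0 ≤ κ) (b : ℝ) :
    Integrable (fun x => (f x - b) * exp (-κ * f x)) μ :=
  (integrable_exp_neg_mul hf hc hκ).bdd_mul (by fun_prop) (c := max |c - b| |M - b|) <|
    (hc.and hM).mono fun x hx => abs_le_max_abs_abs (by linarith [hx.1]) (by linarith [hx.2])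

theorem exp_mul_measureReal_le_integral (hf : AEStronglyMeasurable f μ)
    (hc : ∀ᵐ x ∂μ, c ≤ f x) (hκ : 0 ≤ κ) (b : ℝ) :
    exp (-κ * b) * μ.real {x | f x < b} ≤ ∫ x, exp (-κ * f x) ∂μ := by
  have hint := integrable_exp_neg_mul hf hc hκ
  calc exp (-κ * b) * μ.real {x | f x < b} = ∫ _ in {x | f x < b}, exp (-κ * b) ∂μ := by
        rw [setIntegral_const, smul_eq_mul, mul_comm]
    _ ≤ ∫ x in {x | f x < b}, exp (-κ * f x) ∂μ :=
        setIntegral_mono_on₀ (integrable_const _) hint.integrableOn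
          (nullMeasurableSet_lt hf.aemeasurable aemeasurable_const)
          fun x (hx : f x < b) => exp_le_exp.2 (by nlinarith)
    _ ≤ ∫ x, exp (-κ * f x) ∂μ := setIntegral_le_integral hint (ae_of_all _ fun x => (exp_pos _).le)

theorem integral_exp_neg_mul_pos (hf : AEStronglyMeasurable f μ) (hc : ∀ᵐ x ∂μ, c ≤ f x)
    (hκ : 0 ≤ κ) {b : ℝ} (hb : 0 < μ {x | f x < b}) : 0 < ∫ x, exp (-κ * f x) ∂μ :=
  (mul_pos (exp_pos _) (ENNReal.toReal_pos hb.ne' (measure_ne_top _ _))).trans_le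
    (exp_mul_measureReal_le_integral hf hc hκ b)

theorem boltzmannMean_sub_eq (hf : AEStronglyMeasurable f μ) (hc : ∀ᵐ x ∂μ, c ≤ f x)
    (hM : ∀ᵐ x ∂μ, f x ≤ M) (hκ : 0 ≤ κ) (hZ : ∫ x, exp (-κ * f x) ∂μ ≠ 0) (b : ℝ) :
    boltzmannMean μ f κ - b =
      (∫ x, (f x - b) * exp (-κ * f x) ∂μ) / ∫ x, exp (-κ * f x) ∂μ := by
  have hfZ : Integrable (fun x => f x * exp (-κ * f x)) μ := by
    simpa using integrable_sub_mul_exp_neg_mul hf hc hM hκ 0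
  simp_rw [sub_mul]
  rw [integral_sub hfZ ((integrable_exp_neg_mul hf hc hκ).const_mul b), integral_const_mul,
    boltzmannMean, sub_div, mul_div_cancel_right₀ _ hZ]

theorem le_boltzmannMean (hf : AEStronglyMeasurable f μ) (hc : ∀ᵐ x ∂μ, c ≤ f x)
    (hM : ∀ᵐ x ∂μ, f x ≤ M) (hκ : 0 ≤ κ) (hZ : 0 < ∫ x, exp (-κ * f x) ∂μ) :
    c ≤ boltzmannMean μ f κ := by
  rw [← sub_nonneg, boltzmannMean_sub_eq hf hc hM hκ hZ.ne']
  exact div_nonneg (integral_nonneg_of_ae <|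
    hc.mono fun x hx => mul_nonneg (sub_nonneg.2 hx) (exp_pos _).le) hZ.le

theorem integral_sub_mul_exp_neg_mul_le (hf : AEStronglyMeasurable f μ)
    (hc : ∀ᵐ x ∂μ, c ≤ f x) (hM : ∀ᵐ x ∂μ, f x ≤ M) (hκ : 0 ≤ κ) {ε : ℝ} (hε : 0 ≤ ε) :
    ∫ x, (f x - c) * exp (-κ * f x) ∂μ ≤
      ε * ∫ x, exp (-κ * f x) ∂μ + (M - c) * exp (-κ * (c + ε)) * μ.real univ := by
  have hZ := integrable_exp_neg_mul hf hc hκ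
  calc ∫ x, (f x - c) * exp (-κ * f x) ∂μ
      ≤ ∫ x, (ε * exp (-κ * f x) + (M - c) * exp (-κ * (c + ε))) ∂μ :=
        integral_mono_ae (integrable_sub_mul_exp_neg_mul hf hc hM hκ c)
          ((hZ.const_mul ε).add (integrable_const _))
          ((hc.and hM).mono fun x hx => sub_mul_exp_neg_mul_le hκ hε hx.1 hx.2)
    _ = _ := by
        rw [integral_add (hZ.const_mul ε) (integrable_const _), integral_const_mul,
          integral_const, smul_eq_mul]
        ring

theorem boltzmannMean_sub_le (hf : AEStronglyMeasurable f μ) (hc : ∀ᵐ x ∂μ, c ≤ f x)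
    (hM : ∀ᵐ x ∂μ, f x ≤ M) (hκ : 0 ≤ κ) {ε δ : ℝ} (hε : 0 ≤ ε)
    (hδ : 0 < μ {x | f x < c + δ}) :
    boltzmannMean μ f κ - c ≤
      ε + (M - c) * μ.real univ / μ.real {x | f x < c + δ} * exp (-(ε - δ) * κ) := by
  set Z := ∫ x, exp (-κ * f x) ∂μ
  set m := μ.real {x | f x < c + δ}
  have hZ : 0 < Z := integral_exp_neg_mul_pos hf hc hκ hδ
  have hm : 0 < m := ENNReal.toReal_pos hδ.ne' (measure_ne_top _ _)
  have hMc : 0 ≤ M - c := by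
    have : (ae μ).NeBot := ae_neBot.2 (by rintro rfl; simp at hδ)
    obtain ⟨x, hcx, hxM⟩ := (hc.and hM).exists
    linarith
  rw [boltzmannMean_sub_eq hf hc hM hκ hZ.ne', div_le_iff₀ hZ]
  calc ∫ x, (f x - c) * exp (-κ * f x) ∂μ
      ≤ ε * Z + (M - c) * exp (-κ * (c + ε)) * μ.real univ :=
        integral_sub_mul_exp_neg_mul_le hf hc hM hκ hε
    _ = ε * Z + (M - c) * μ.real univ / m * exp (-(ε - δ) * κ) * (exp (-κ * (c + δ)) * m) := by
        have hexp : exp (-(ε - δ) * κ) * exp (-κ * (c + δ)) = exp (-κ * (c + ε)) := by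
          rw [← exp_add]; ring_nf
        rw [← hexp]
        field_simp
    _ ≤ ε * Z + (M - c) * μ.real univ / m * exp (-(ε - δ) * κ) * Z := by
        gcongr
        exact exp_mul_measureReal_le_integral hf hc hκ _
    _ = _ := by ring

theorem tendsto_boltzmannMean_atTop (hf : AEStronglyMeasurable f μ) (hc : ∀ᵐ x ∂μ, c ≤ f x)
    (hM : ∀ᵐ x ∂μ, f x ≤ M) (hpos : ∀ ε > 0, 0 < μ {x | f x < c + ε}) :
    Tendsto (boltzmannMean μ f) atTop (𝓝 c) := by
  refine tendsto_order.2 ⟨fun a ha => ?_, fun a ha => ?_⟩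
  · filter_upwards [eventually_ge_atTop 0] with κ hκ
    exact ha.trans_le <| le_boltzmannMean hf hc hM hκ <|
      integral_exp_neg_mul_pos hf hc hκ (hpos 1 one_pos)
  · obtain ⟨ε, hε, rfl⟩ : ∃ ε > 0, a = c + 2 * ε := ⟨(a - c) / 2, by linarith, by ring⟩
    set C := (M - c) * μ.real univ / μ.real {x | f x < c + ε / 2}
    have hdecay : Tendsto (fun κ => C * exp (-(ε - ε / 2) * κ)) atTop (𝓝 0) := by
      simpa using (tendsto_exp_atBot.comp
        (tendsto_id.const_mul_atTop_of_neg (by linarith : -(ε - ε / 2) < 0))).const_mul C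
    filter_upwards [hdecay.eventually (gt_mem_nhds hε), eventually_ge_atTop 0] with κ hsmall hκ
    have : boltzmannMean μ f κ - c ≤ ε + C * exp (-(ε - ε / 2) * κ) :=
      boltzmannMean_sub_le hf hc hM hκ hε.le (hpos _ (half_pos hε))
    linarith

end Boltzmann

theorem boltzmann_expectation_tendsto_min_general
    (d : ℕ)
    (Ω : Set (EuclideanSpace ℝ (Fin d)))
    (hΩc : IsCompact Ω)
    (hΩcl : Ω = closure (interior Ω))
    (f : EuclideanSpace ℝ (Fin d) → ℝ)
    (hf : ContinuousOn f Ω)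
    (fstar : ℝ) (hmin : IsLeast (f '' Ω) fstar)
    (m : ℝ → EuclideanSpace ℝ (Fin d) → ℝ)
    (hm : ∀ κ x, m κ x = Real.exp (-κ * f x) / ∫ t in Ω, Real.exp (-κ * f t)) :
    Tendsto (fun κ : ℝ => ∫ x in Ω, f x * m κ x) atTop (𝓝 fstar) := by
  obtain ⟨⟨xmin, hxmin, hfxmin⟩, hlow⟩ := hmin
  obtain ⟨M, hM⟩ := hΩc.bddAbove_image hf
  have hΩm := hΩc.measurableSet
  have : IsFiniteMeasure (volume.restrict Ω) :=
    isFiniteMeasure_restrict.2 hΩc.measure_lt_top.ne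
  have hmean : (fun κ => ∫ x in Ω, f x * m κ x) = boltzmannMean (volume.restrict Ω) f := by
    funext κ
    simp_rw [hm, ← mul_div_assoc]
    exact integral_div _ _
  rw [hmean]
  refine tendsto_boltzmannMean_atTop (hf.aestronglyMeasurable hΩm)
    (ae_restrict_of_forall_mem hΩm fun x hx => hlow ⟨x, hx, rfl⟩)
    (ae_restrict_of_forall_mem hΩm fun x hx => hM ⟨x, hx, rfl⟩) fun ε hε => ?_
  exact measure_restrict_pos_of_mem_nhdsWithin hΩcl.subset hxmin
    (hf xmin hxmin (Iio_mem_nhds (by linarith)))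

/-- The expectation of `f` under the Boltzmann density converges to the
global minimum value `f*` as `κ → ∞`. -/
theorem boltzmann_expectation_tendsto_min
    (d : ℕ) (hd : 1 ≤ d)
    (Ω : Set (EuclideanSpace ℝ (Fin d)))
    (hΩc : IsCompact Ω)
    (hΩcl : Ω = closure (interior Ω))
    (hΩint : (interior Ω).Nonempty)
    (f : EuclideanSpace ℝ (Fin d) → ℝ)
    (hf : ContinuousOn f Ω)
    (fstar : ℝ) (hmin : IsLeast (f '' Ω) fstar)
    (m : ℝ → EuclideanSpace ℝ (Fin d) → ℝ)
    (hm : ∀ κ x, m κ x = Real.exp (-κ * f x) / ∫ t in Ω, Real.exp (-κ * f t)) :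
    Tendsto (fun κ : ℝ => ∫ x in Ω, f x * m κ x) atTop (𝓝 fstar) :=
  boltzmann_expectation_tendsto_min_general d Ω hΩc hΩcl f hf fstar hmin m hm
end

section
/- Suppose the set of global minimizers has Lebesgue measure zero, i.e. λ(X*) = 0. Then, as κ → ∞, the nascent minima density diverges on the minimizers and vanishes elsewhere: for every x ∈ X*, m^(κ)(x) → ∞, and for every x ∈ Ω \ X*, m^(κ)(x) → 0. -/
/-!
With `g = τ ∘ f` and `M = τ f*`, the density at a minimizer is `M ^ κ / ∫_Ω g ^ κ`, the reciprocal
of `∫_Ω (g / M) ^ κ`; since `g < M` off the null set `X*`, dominated convergence sends this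
integral to `0`. Off `X*`, pick `y` strictly between `f*` and `f x` and put `c = τ y > τ (f x)`:
because `Ω` is the closure of its interior, `{t ∈ Ω | f t < y} ⊆ {c ≤ g}` has positive measure `v`,
and Markov's inequality bounds the density by `(τ (f x) / c) ^ κ / v → 0`.
-/

open MeasureTheory Filter Topology

section
variable {α : Type*} [MeasurableSpace α] {μ : Measure α} {g : α → ℝ}

theorem integrable_rpow_of_ae_le [IsFiniteMeasure μ] {M κ : ℝ} (hg : AEMeasurable g μ)
    (hg0 : 0 ≤ᵐ[μ] g) (hgM : ∀ᵐ t ∂μ, g t ≤ M) (hκ : 0 ≤ κ) :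
    Integrable (fun t => g t ^ κ) μ := by
  refine .of_bound (hg.pow_const κ).aestronglyMeasurable (M ^ κ) ?_
  filter_upwards [hg0, hgM] with t ht0 htM
  rw [Real.norm_of_nonneg (Real.rpow_nonneg ht0 κ)]
  exact Real.rpow_le_rpow ht0 htM hκ

theorem tendsto_integral_rpow_of_ae_lt_one [IsFiniteMeasure μ] (hg : AEMeasurable g μ)
    (hg0 : 0 ≤ᵐ[μ] g) (hg1 : ∀ᵐ t ∂μ, g t < 1) :
    Tendsto (fun κ : ℝ => ∫ t, g t ^ κ ∂μ) atTop (𝓝 0) := by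
  have hbound : ∀ᶠ κ : ℝ in atTop, ∀ᵐ t ∂μ, ‖g t ^ κ‖ ≤ 1 := by
    filter_upwards [eventually_ge_atTop 0] with κ hκ
    filter_upwards [hg0, hg1] with t ht0 ht1
    rw [Real.norm_of_nonneg (Real.rpow_nonneg ht0 κ)]
    exact Real.rpow_le_one ht0 ht1.le hκ
  have hlim : ∀ᵐ t ∂μ, Tendsto (fun κ : ℝ => g t ^ κ) atTop (𝓝 0) := by
    filter_upwards [hg0, hg1] with t ht0 ht1
    exact tendsto_rpow_atTop_of_base_lt_one _ (neg_one_lt_zero.trans_le ht0) ht1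
  simpa using tendsto_integral_filter_of_dominated_convergence (fun _ => 1)
    (.of_forall fun κ => (hg.pow_const κ).aestronglyMeasurable) hbound
    (integrable_const 1) hlim

theorem tendsto_rpow_div_integral_rpow_atTop [IsFiniteMeasure μ] [NeZero μ] {M : ℝ}
    (hg : AEMeasurable g μ) (hg_pos : ∀ t, 0 < g t) (hgM : ∀ᵐ t ∂μ, g t < M) :
    Tendsto (fun κ : ℝ => M ^ κ / ∫ t, g t ^ κ ∂μ) atTop atTop := by
  obtain ⟨t₀, ht₀⟩ := hgM.exists
  have hM : 0 < M := (hg_pos t₀).trans ht₀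
  have hg_div : AEMeasurable (fun t => g t / M) μ := hg.div_const M
  have hg_div0 : 0 ≤ᵐ[μ] fun t => g t / M := .of_forall fun t => (div_pos (hg_pos t) hM).le
  have hg_div1 : ∀ᵐ t ∂μ, g t / M < 1 := by
    filter_upwards [hgM] with t ht using (div_lt_one hM).2 ht
  have hpos : ∀ᶠ κ : ℝ in atTop, 0 < ∫ t, (g t / M) ^ κ ∂μ := by
    filter_upwards [eventually_ge_atTop 0] with κ hκ
    have hsupp : Function.support (fun t => (g t / M) ^ κ) = Set.univ :=
      Set.eq_univ_of_forall fun t => (Real.rpow_pos_of_pos (div_pos (hg_pos t) hM) κ).ne'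
    rw [integral_pos_iff_support_of_nonneg_ae (hg_div0.mono fun t ht => Real.rpow_nonneg ht κ)
      (integrable_rpow_of_ae_le hg_div hg_div0 (hg_div1.mono fun t ht => ht.le) hκ), hsupp]
    exact Measure.measure_univ_pos.2 (NeZero.ne μ)
  have heq : ∀ κ : ℝ, M ^ κ / ∫ t, g t ^ κ ∂μ = (∫ t, (g t / M) ^ κ ∂μ)⁻¹ := by
    intro κ
    have : ∫ t, (g t / M) ^ κ ∂μ = (∫ t, g t ^ κ ∂μ) / M ^ κ := by
      rw [← integral_div]
      exact integral_congr_ae (.of_forall fun t => Real.div_rpow (hg_pos t).le hM.le κ)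
    rw [this, inv_div]
  simp_rw [heq]
  exact (tendsto_nhdsWithin_iff.2 ⟨tendsto_integral_rpow_of_ae_lt_one hg_div hg_div0 hg_div1,
    hpos⟩).inv_tendsto_nhdsGT_zero

theorem tendsto_rpow_div_integral_rpow_zero [IsFiniteMeasure μ] {a c : ℝ} (hg0 : 0 ≤ᵐ[μ] g)
    (ha : 0 ≤ a) (hac : a < c) (hc : 0 < μ {t | c ≤ g t}) :
    Tendsto (fun κ : ℝ => a ^ κ / ∫ t, g t ^ κ ∂μ) atTop (𝓝 0) := by
  have hc0 : 0 < c := ha.trans_lt hac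
  set v := μ.real {t | c ≤ g t}
  have hv : 0 < v := ENNReal.toReal_pos hc.ne' (measure_ne_top _ _)
  have hle : ∀ κ : ℝ, 0 ≤ κ → a ^ κ / ∫ t, g t ^ κ ∂μ ≤ (a / c) ^ κ / v := by
    intro κ hκ
    by_cases hint : Integrable (fun t => g t ^ κ) μ
    · have hlow : c ^ κ * v ≤ ∫ t, g t ^ κ ∂μ := by
        refine le_trans ?_ (mul_meas_ge_le_integral_of_nonneg
          (hg0.mono fun t ht => Real.rpow_nonneg ht κ) hint (c ^ κ))
        gcongr
        exact measureReal_mono fun t ht => Real.rpow_le_rpow hc0.le ht hκ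
      calc a ^ κ / ∫ t, g t ^ κ ∂μ ≤ a ^ κ / (c ^ κ * v) := by gcongr
        _ = (a / c) ^ κ / v := by rw [Real.div_rpow ha hc0.le, div_div]
    · rw [integral_undef hint, div_zero]
      positivity
  have hlim : Tendsto (fun κ : ℝ => (a / c) ^ κ / v) atTop (𝓝 0) := by
    simpa using (tendsto_rpow_atTop_of_base_lt_one _
      (neg_one_lt_zero.trans_le (by positivity)) ((div_lt_one hc0).2 hac)).div_const v
  refine squeeze_zero' ?_ ((eventually_ge_atTop 0).mono hle) hlim
  exact .of_forall fun κ => div_nonneg (Real.rpow_nonneg ha κ)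
    (integral_nonneg_of_ae (hg0.mono fun t ht => Real.rpow_nonneg ht κ))

end

theorem ContinuousOn.measure_inter_preimage_pos {X Y : Type*} [TopologicalSpace X]
    [MeasurableSpace X] [TopologicalSpace Y] (μ : Measure X) [μ.IsOpenPosMeasure] {s : Set X}
    {f : X → Y} {U : Set Y} {x : X} (hs : s ⊆ closure (interior s)) (hf : ContinuousOn f s)
    (hU : IsOpen U) (hx : x ∈ s) (hxU : f x ∈ U) : 0 < μ (s ∩ f ⁻¹' U) := by
  obtain ⟨V, hVo, hxV, hVs⟩ := mem_nhdsWithin.1 (hf x hx |>.preimage_mem_nhdsWithin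
    (hU.mem_nhds hxU))
  have hne : (V ∩ interior s).Nonempty := mem_closure_iff.1 (hs hx) V hVo hxV
  refine ((hVo.inter isOpen_interior).measure_pos μ hne).trans_le (measure_mono ?_)
  exact fun t ⟨htV, hts⟩ => ⟨interior_subset hts, hVs ⟨htV, interior_subset hts⟩⟩

theorem nascent_minima_density_limit_of_measure_zero_general
    (d : ℕ)
    (Ω : Set (EuclideanSpace ℝ (Fin d)))
    (hΩc : IsCompact Ω)
    (hΩcl : Ω = closure (interior Ω))
    (hΩint : (interior Ω).Nonempty)
    (f : EuclideanSpace ℝ (Fin d) → ℝ)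
    (hf : ContinuousOn f Ω)
    (fstar : ℝ) (hmin : IsLeast (f '' Ω) fstar)
    (τ : ℝ → ℝ) (hτ : StrictAnti τ) (hτpos : ∀ y, 0 < τ y)
    (m : ℝ → EuclideanSpace ℝ (Fin d) → ℝ)
    (hm : ∀ κ x, m κ x = τ (f x) ^ κ / ∫ t in Ω, τ (f t) ^ κ)
    (hX0 : volume {x | x ∈ Ω ∧ f x = fstar} = 0) :
    (∀ x ∈ {x | x ∈ Ω ∧ f x = fstar}, Tendsto (fun κ : ℝ => m κ x) atTop atTop) ∧
    (∀ x ∈ Ω \ {x | x ∈ Ω ∧ f x = fstar}, Tendsto (fun κ : ℝ => m κ x) atTop (𝓝 0)) := by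
  have hΩm : MeasurableSet Ω := hΩc.isClosed.measurableSet
  have : IsFiniteMeasure (volume.restrict Ω) := isFiniteMeasure_restrict.2 hΩc.measure_lt_top.ne
  have : NeZero (volume.restrict Ω) :=
    ⟨mt Measure.restrict_eq_zero.1 (Measure.measure_pos_of_nonempty_interior _ hΩint).ne'⟩
  have hfstar : ∀ t ∈ Ω, fstar ≤ f t := fun t ht => hmin.2 ⟨t, ht, rfl⟩
  refine ⟨fun x ⟨_, hx⟩ => ?_, fun x ⟨hxΩ, hx⟩ => ?_⟩
  · have hτf : AEMeasurable (fun t => τ (f t)) (volume.restrict Ω) :=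
      hτ.antitone.measurable.comp_aemeasurable (hf.aemeasurable hΩm)
    have hlt : ∀ᵐ t ∂volume.restrict Ω, τ (f t) < τ fstar := by
      filter_upwards [ae_restrict_mem hΩm, ae_restrict_of_ae (measure_eq_zero_iff_ae_notMem.1 hX0)]
        with t htΩ ht
      exact hτ ((hfstar t htΩ).lt_of_ne fun h => ht ⟨htΩ, h.symm⟩)
    simpa only [hm, hx] using tendsto_rpow_div_integral_rpow_atTop hτf (fun t => hτpos _) hlt
  · obtain ⟨x₀, hx₀Ω, hx₀⟩ := hmin.1
    obtain ⟨y, hy₀, hy⟩ := exists_between ((hfstar x hxΩ).lt_of_ne fun h => hx ⟨hxΩ, h.symm⟩)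
    have hpos : 0 < volume.restrict Ω {t | τ y ≤ τ (f t)} := by
      refine (hf.measure_inter_preimage_pos volume hΩcl.subset isOpen_Iio hx₀Ω
        (hx₀.trans_lt hy₀)).trans_le ((measure_mono ?_).trans (Measure.le_restrict_apply _ _))
      exact fun t ⟨htΩ, ht⟩ => ⟨hτ.antitone (le_of_lt ht), htΩ⟩
    simpa only [hm] using tendsto_rpow_div_integral_rpow_zero
      (.of_forall fun t => (hτpos (f t)).le) (hτpos _).le (hτ hy) hpos

/-- If the set of global minimizers `X* = {x ∈ Ω | f x = f*}` has Lebesgue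
measure zero, then as `κ → ∞` the nascent minima density
`m^(κ)(x) = τ(f x)^κ / ∫_Ω τ(f t)^κ dt` diverges on `X*` and tends to `0` on `Ω \ X*`. -/
theorem nascent_minima_density_limit_of_measure_zero
    (d : ℕ) (hd : 1 ≤ d)
    (Ω : Set (EuclideanSpace ℝ (Fin d)))
    (hΩc : IsCompact Ω)
    (hΩcl : Ω = closure (interior Ω))
    (hΩint : (interior Ω).Nonempty)
    (f : EuclideanSpace ℝ (Fin d) → ℝ)
    (hf : ContinuousOn f Ω)
    (fstar : ℝ) (hmin : IsLeast (f '' Ω) fstar)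
    (τ : ℝ → ℝ) (hτ : StrictAnti τ) (hτpos : ∀ y, 0 < τ y)
    (m : ℝ → EuclideanSpace ℝ (Fin d) → ℝ)
    (hm : ∀ κ x, m κ x = τ (f x) ^ κ / ∫ t in Ω, τ (f t) ^ κ)
    (hX0 : volume {x | x ∈ Ω ∧ f x = fstar} = 0) :
    (∀ x ∈ {x | x ∈ Ω ∧ f x = fstar}, Tendsto (fun κ : ℝ => m κ x) atTop atTop) ∧
    (∀ x ∈ Ω \ {x | x ∈ Ω ∧ f x = fstar}, Tendsto (fun κ : ℝ => m κ x) atTop (𝓝 0)) :=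
  nascent_minima_density_limit_of_measure_zero_general d Ω hΩc hΩcl hΩint f hf fstar hmin τ hτ hτpos
    m hm hX0
end

section
/- Suppose the set of global minimizers has positive Lebesgue measure, i.e. λ(X*) > 0. Then, as κ → ∞, the nascent minima density converges pointwise to the uniform density on the minimizers: for every x ∈ X*, m^(κ)(x) → λ(X*)^{-1}, and for every x ∈ Ω \ X*, m^(κ)(x) → 0. -/
open MeasureTheory Filter Topology

/-! On a finite measure space, if `0 ≤ g ≤ 1` then `g ^ κ` converges pointwise, as
`κ → ∞`, to the indicator of `{g = 1}`, so by dominated convergence `∫ g ^ κ` tends to the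
measure of `{g = 1}`. Dividing numerator and denominator of `m κ x` by `τ(f*) ^ κ` puts the
density in this form with `g = τ ∘ f / τ(f*)`, whose level set `{g = 1}` in `Ω` is exactly
`X*` because `τ` is injective. -/

section RpowIntegral

variable {α : Type*} [MeasurableSpace α] {μ : Measure α}

theorem tendsto_rpow_atTop_indicator_one {b : ℝ} (h0 : 0 ≤ b) (h1 : b ≤ 1) :
    Tendsto (fun κ : ℝ => b ^ κ) atTop (𝓝 (({1} : Set ℝ).indicator 1 b)) := by
  rcases h1.lt_or_eq with hlt | rfl
  · rw [Set.indicator_of_notMem (Set.notMem_singleton_iff.2 hlt.ne)]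
    exact tendsto_rpow_atTop_of_base_lt_one b (by linarith) hlt
  · rw [Set.indicator_of_mem (Set.mem_singleton 1), Pi.one_apply]
    simpa only [Real.one_rpow] using tendsto_const_nhds

theorem tendsto_integral_rpow_atTop_measureReal_preimage_one [IsFiniteMeasure μ] {g : α → ℝ}
    (hg : AEMeasurable g μ) (h0 : ∀ᵐ t ∂μ, 0 ≤ g t) (h1 : ∀ᵐ t ∂μ, g t ≤ 1) :
    Tendsto (fun κ : ℝ => ∫ t, g t ^ κ ∂μ) atTop (𝓝 (μ.real (g ⁻¹' {1}))) := by
  have hlim : ∫ t, (g ⁻¹' {1}).indicator 1 t ∂μ = μ.real (g ⁻¹' {1}) := by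
    rw [integral_indicator₀ (hg.nullMeasurable (measurableSet_singleton 1)), Pi.one_def,
      setIntegral_const, smul_eq_mul, mul_one]
  rw [← hlim]
  refine tendsto_integral_filter_of_dominated_convergence (fun _ => 1)
    (.of_forall fun κ => (hg.pow_const κ).aestronglyMeasurable) ?_ (integrable_const 1) ?_
  · filter_upwards [eventually_ge_atTop 0] with κ hκ
    filter_upwards [h0, h1] with t ht0 ht1
    rw [Real.norm_of_nonneg (Real.rpow_nonneg ht0 κ)]
    exact Real.rpow_le_one ht0 ht1 hκ
  · filter_upwards [h0, h1] with t ht0 ht1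
    exact tendsto_rpow_atTop_indicator_one ht0 ht1

theorem rpow_div_integral_rpow_eq_div_rpow_div_integral {h : α → ℝ} (h0 : ∀ t, 0 ≤ h t)
    {a M : ℝ} (ha : 0 ≤ a) (hM : 0 < M) (κ : ℝ) :
    a ^ κ / ∫ t, h t ^ κ ∂μ = (a / M) ^ κ / ∫ t, (h t / M) ^ κ ∂μ := by
  simp_rw [Real.div_rpow (h0 _) hM.le, Real.div_rpow ha hM.le, integral_div]
  rw [div_div_div_cancel_right₀ (Real.rpow_pos_of_pos hM κ).ne']

end RpowIntegral

theorem nascent_minima_density_limit_of_measure_pos_general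
    (d : ℕ)
    (Ω : Set (EuclideanSpace ℝ (Fin d)))
    (hΩc : IsCompact Ω)
    (f : EuclideanSpace ℝ (Fin d) → ℝ)
    (hf : ContinuousOn f Ω)
    (fstar : ℝ) (hmin : IsLeast (f '' Ω) fstar)
    (τ : ℝ → ℝ) (hτ : StrictAnti τ) (hτpos : ∀ y, 0 < τ y)
    (m : ℝ → EuclideanSpace ℝ (Fin d) → ℝ)
    (hm : ∀ κ x, m κ x = τ (f x) ^ κ / ∫ t in Ω, τ (f t) ^ κ)
    (hXpos : 0 < volume {x | x ∈ Ω ∧ f x = fstar}) :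
    (∀ x ∈ {x | x ∈ Ω ∧ f x = fstar},
      Tendsto (fun κ : ℝ => m κ x) atTop
        (𝓝 ((volume {x | x ∈ Ω ∧ f x = fstar}).toReal⁻¹))) ∧
    (∀ x ∈ Ω \ {x | x ∈ Ω ∧ f x = fstar}, Tendsto (fun κ : ℝ => m κ x) atTop (𝓝 0)) := by
  set S := {x | x ∈ Ω ∧ f x = fstar}
  set g := fun t => τ (f t) / τ fstar
  have hM : 0 < τ fstar := hτpos fstar
  have hg0 : ∀ t, 0 ≤ g t := fun t => (div_pos (hτpos (f t)) hM).le
  have hg1 : ∀ t ∈ Ω, g t ≤ 1 := fun t ht =>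
    (div_le_one hM).2 (hτ.antitone (hmin.2 ⟨t, ht, rfl⟩))
  have hg_eq_one : ∀ t, g t = 1 ↔ f t = fstar := fun t => by
    rw [div_eq_one_iff_eq hM.ne', hτ.injective.eq_iff]
  have hm' : ∀ κ x, m κ x = g x ^ κ / ∫ t in Ω, g t ^ κ := fun κ x => by
    rw [hm]
    exact rpow_div_integral_rpow_eq_div_rpow_div_integral (fun _ => (hτpos _).le)
      (hτpos _).le hM κ
  have hΩm : MeasurableSet Ω := hΩc.measurableSet
  have hI : Tendsto (fun κ : ℝ => ∫ t in Ω, g t ^ κ) atTop (𝓝 (volume S).toReal) := by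
    have : Fact (volume Ω < ⊤) := ⟨hΩc.measure_lt_top⟩
    have hgm : AEMeasurable g (volume.restrict Ω) :=
      (hτ.antitone.measurable.comp_aemeasurable (hf.aemeasurable hΩm)).div_const _
    convert tendsto_integral_rpow_atTop_measureReal_preimage_one hgm (.of_forall hg0)
      ((ae_restrict_iff' hΩm).2 (.of_forall hg1)) using 2
    have hS : g ⁻¹' {1} ∩ Ω = S := by
      ext t
      simp [S, hg_eq_one, and_comm]
    rw [measureReal_restrict_apply' hΩm, hS, measureReal_def]
  have hS_fin : volume S ≠ ⊤ :=
    ((measure_mono fun x hx => hx.1).trans_lt hΩc.measure_lt_top).ne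
  have hL : (volume S).toReal ≠ 0 := (ENNReal.toReal_pos hXpos.ne' hS_fin).ne'
  refine ⟨fun x hx => ?_, fun x hx => ?_⟩
  · simpa only [hm', (hg_eq_one x).2 hx.2, Real.one_rpow, one_div] using hI.inv₀ hL
  · have hlt : g x < 1 := (hg1 x hx.1).lt_of_ne fun h => hx.2 ⟨hx.1, (hg_eq_one x).1 h⟩
    simp only [hm']
    rw [← zero_div (volume S).toReal]
    exact (tendsto_rpow_atTop_of_base_lt_one _ (by linarith [hg0 x]) hlt).div hI hL

/-- If the set of global minimizers `X* = {x ∈ Ω | f x = f*}` has positive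
Lebesgue measure, then as `κ → ∞` the nascent minima density converges pointwise to
`λ(X*)⁻¹` on `X*` and to `0` on `Ω \ X*`. -/
theorem nascent_minima_density_limit_of_measure_pos
    (d : ℕ) (hd : 1 ≤ d)
    (Ω : Set (EuclideanSpace ℝ (Fin d)))
    (hΩc : IsCompact Ω)
    (hΩcl : Ω = closure (interior Ω))
    (hΩint : (interior Ω).Nonempty)
    (f : EuclideanSpace ℝ (Fin d) → ℝ)
    (hf : ContinuousOn f Ω)
    (fstar : ℝ) (hmin : IsLeast (f '' Ω) fstar)
    (τ : ℝ → ℝ) (hτ : StrictAnti τ) (hτpos : ∀ y, 0 < τ y)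
    (m : ℝ → EuclideanSpace ℝ (Fin d) → ℝ)
    (hm : ∀ κ x, m κ x = τ (f x) ^ κ / ∫ t in Ω, τ (f t) ^ κ)
    (hXpos : 0 < volume {x | x ∈ Ω ∧ f x = fstar}) :
    (∀ x ∈ {x | x ∈ Ω ∧ f x = fstar},
      Tendsto (fun κ : ℝ => m κ x) atTop
        (𝓝 ((volume {x | x ∈ Ω ∧ f x = fstar}).toReal⁻¹))) ∧
    (∀ x ∈ Ω \ {x | x ∈ Ω ∧ f x = fstar}, Tendsto (fun κ : ℝ => m κ x) atTop (𝓝 0)) :=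
  nascent_minima_density_limit_of_measure_pos_general d Ω hΩc f hf fstar hmin τ hτ hτpos m hm hXpos
end

section
/- The expectation of f under the nascent minima density converges to the global minimum value: lim_{κ → ∞} ∫_Ω f(x) m^(κ)(x) dx = f*. -/
open MeasureTheory Filter Topology

/-!
Weighting by `τ (f x) ^ κ` concentrates the mass where `f` is small. For `ε > 0` put
`a = τ (f* + ε / 2) > b = τ (f* + ε)`. The normalising integral is at least `a ^ κ` times the
measure of `{f < f* + ε / 2}`, which is positive because `f` is continuous and `Ω` is the closure
of its interior, while on `{f ≥ f* + ε}` the weight is at most `b ^ κ`. Hence the mean of `f - f*`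
is at most `ε + (b / a) ^ κ ∫ (f - f*) / |{f < f* + ε / 2}|`, and `(b / a) ^ κ → 0`.
-/

noncomputable def nascentMinimaMean {X : Type*} [MeasurableSpace X] (μ : Measure X)
    (τ : ℝ → ℝ) (f : X → ℝ) (κ : ℝ) : ℝ :=
  (∫ x, f x * τ (f x) ^ κ ∂μ) / ∫ x, τ (f x) ^ κ ∂μ

section NascentMinimaMean

variable {X : Type*} [MeasurableSpace X] {μ : Measure X} {f g : X → ℝ} {τ : ℝ → ℝ}
  {fstar κ : ℝ}

lemma ae_norm_rpow_comp_le (hτ : Antitone τ) (hτpos : ∀ y, 0 < τ y)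
    (hmin : ∀ᵐ x ∂μ, fstar ≤ f x) (hκ : 0 ≤ κ) :
    ∀ᵐ x ∂μ, ‖τ (f x) ^ κ‖ ≤ τ fstar ^ κ := by
  filter_upwards [hmin] with x hx
  rw [Real.norm_of_nonneg (Real.rpow_nonneg (hτpos _).le _)]
  exact Real.rpow_le_rpow (hτpos _).le (hτ hx) hκ

lemma integrable_rpow_comp [IsFiniteMeasure μ] (hτ : Antitone τ) (hτpos : ∀ y, 0 < τ y)
    (hf : AEMeasurable f μ) (hmin : ∀ᵐ x ∂μ, fstar ≤ f x) (hκ : 0 ≤ κ) :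
    Integrable (fun x => τ (f x) ^ κ) μ :=
  .of_bound ((hτ.measurable.comp_aemeasurable hf).pow_const κ).aestronglyMeasurable _
    (ae_norm_rpow_comp_le hτ hτpos hmin hκ)

lemma MeasureTheory.Integrable.mul_rpow_comp (hg : Integrable g μ) (hτ : Antitone τ)
    (hτpos : ∀ y, 0 < τ y) (hf : AEMeasurable f μ) (hmin : ∀ᵐ x ∂μ, fstar ≤ f x) (hκ : 0 ≤ κ) :
    Integrable (fun x => g x * τ (f x) ^ κ) μ :=
  hg.mul_bdd ((hτ.measurable.comp_aemeasurable hf).pow_const κ).aestronglyMeasurable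
    (ae_norm_rpow_comp_le hτ hτpos hmin hκ)

lemma rpow_mul_measureReal_lt_le_integral_rpow_comp [IsFiniteMeasure μ] (hτ : Antitone τ)
    (hτpos : ∀ y, 0 < τ y) (hw : Integrable (fun x => τ (f x) ^ κ) μ) (hκ : 0 ≤ κ) (c : ℝ) :
    τ c ^ κ * μ.real {x | f x < c} ≤ ∫ x, τ (f x) ^ κ ∂μ :=
  calc τ c ^ κ * μ.real {x | f x < c}
      ≤ τ c ^ κ * μ.real {x | τ c ^ κ ≤ τ (f x) ^ κ} := by
        refine mul_le_mul_of_nonneg_left (measureReal_mono fun x hx => ?_)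
          (Real.rpow_nonneg (hτpos c).le κ)
        exact Real.rpow_le_rpow (hτpos c).le (hτ (le_of_lt hx)) hκ
    _ ≤ ∫ x, τ (f x) ^ κ ∂μ :=
        mul_meas_ge_le_integral_of_nonneg
          (ae_of_all _ fun x => Real.rpow_nonneg (hτpos _).le κ) hw _

lemma integral_sub_mul_rpow_comp_le [IsFiniteMeasure μ] (hτ : Antitone τ)
    (hτpos : ∀ y, 0 < τ y) (hf : Integrable f μ) (hmin : ∀ᵐ x ∂μ, fstar ≤ f x) (hκ : 0 ≤ κ)
    {ε : ℝ} (hε : 0 ≤ ε) :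
    ∫ x, (f x - fstar) * τ (f x) ^ κ ∂μ
      ≤ ε * ∫ x, τ (f x) ^ κ ∂μ + τ (fstar + ε) ^ κ * ∫ x, (f x - fstar) ∂μ := by
  have hw := integrable_rpow_comp hτ hτpos hf.aemeasurable hmin hκ
  have hsub : Integrable (fun x => f x - fstar) μ := hf.sub (integrable_const fstar)
  rw [← integral_const_mul, ← integral_const_mul, ← integral_add (hw.const_mul ε)
    (hsub.const_mul _)]
  refine integral_mono_ae (hsub.mul_rpow_comp hτ hτpos hf.aemeasurable hmin hκ)
    ((hw.const_mul ε).add (hsub.const_mul _)) ?_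
  filter_upwards [hmin] with x hx
  have hw₀ : 0 ≤ τ (f x) ^ κ := Real.rpow_nonneg (hτpos _).le κ
  have hb₀ : 0 ≤ τ (fstar + ε) ^ κ := Real.rpow_nonneg (hτpos _).le κ
  have hfx : 0 ≤ f x - fstar := sub_nonneg.2 hx
  rcases lt_or_ge (f x) (fstar + ε) with hlt | hge
  · have : (f x - fstar) * τ (f x) ^ κ ≤ ε * τ (f x) ^ κ := by gcongr; linarith
    nlinarith
  · have : τ (f x) ^ κ ≤ τ (fstar + ε) ^ κ := Real.rpow_le_rpow (hτpos _).le (hτ hge) hκ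
    nlinarith

lemma nascentMinimaMean_sub_eq (hw : Integrable (fun x => τ (f x) ^ κ) μ)
    (hfw : Integrable (fun x => f x * τ (f x) ^ κ) μ) (hZ : ∫ x, τ (f x) ^ κ ∂μ ≠ 0) :
    nascentMinimaMean μ τ f κ - fstar
      = (∫ x, (f x - fstar) * τ (f x) ^ κ ∂μ) / ∫ x, τ (f x) ^ κ ∂μ := by
  simp_rw [sub_mul]
  rw [integral_sub hfw (hw.const_mul fstar), integral_const_mul, nascentMinimaMean]
  field_simp

variable [IsFiniteMeasure μ]

lemma le_nascentMinimaMean (hτ : Antitone τ) (hτpos : ∀ y, 0 < τ y) (hf : Integrable f μ)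
    (hmin : ∀ᵐ x ∂μ, fstar ≤ f x) (hκ : 0 ≤ κ) (hZ : 0 < ∫ x, τ (f x) ^ κ ∂μ) :
    fstar ≤ nascentMinimaMean μ τ f κ := by
  rw [← sub_nonneg, nascentMinimaMean_sub_eq
    (integrable_rpow_comp hτ hτpos hf.aemeasurable hmin hκ)
    (hf.mul_rpow_comp hτ hτpos hf.aemeasurable hmin hκ) hZ.ne']
  refine div_nonneg (integral_nonneg_of_ae ?_) hZ.le
  filter_upwards [hmin] with x hx
  exact mul_nonneg (sub_nonneg.2 hx) (Real.rpow_nonneg (hτpos _).le κ)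

lemma nascentMinimaMean_le (hτ : Antitone τ) (hτpos : ∀ y, 0 < τ y) (hf : Integrable f μ)
    (hmin : ∀ᵐ x ∂μ, fstar ≤ f x) (hκ : 0 ≤ κ) {ε c : ℝ} (hε : 0 ≤ ε)
    (hc : 0 < μ.real {x | f x < c}) :
    nascentMinimaMean μ τ f κ
      ≤ fstar + ε
        + (τ (fstar + ε) / τ c) ^ κ * ((∫ x, (f x - fstar) ∂μ) / μ.real {x | f x < c}) := by
  set Z := ∫ x, τ (f x) ^ κ ∂μ
  set I := ∫ x, (f x - fstar) ∂μ
  have hw := integrable_rpow_comp hτ hτpos hf.aemeasurable hmin hκ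
  have haδ : 0 < τ c ^ κ * μ.real {x | f x < c} :=
    mul_pos (Real.rpow_pos_of_pos (hτpos c) κ) hc
  have hZ : τ c ^ κ * μ.real {x | f x < c} ≤ Z :=
    rpow_mul_measureReal_lt_le_integral_rpow_comp hτ hτpos hw hκ c
  have hZpos : 0 < Z := haδ.trans_le hZ
  have hI : 0 ≤ I :=
    integral_nonneg_of_ae (by filter_upwards [hmin] with x hx using sub_nonneg.2 hx)
  have hb : 0 ≤ τ (fstar + ε) ^ κ := Real.rpow_nonneg (hτpos _).le κ
  calc nascentMinimaMean μ τ f κ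
      = fstar + (∫ x, (f x - fstar) * τ (f x) ^ κ ∂μ) / Z := by
        rw [← nascentMinimaMean_sub_eq hw (hf.mul_rpow_comp hτ hτpos hf.aemeasurable hmin hκ)
          hZpos.ne', add_sub_cancel]
    _ ≤ fstar + (ε * Z + τ (fstar + ε) ^ κ * I) / Z := by
        gcongr
        exact integral_sub_mul_rpow_comp_le hτ hτpos hf hmin hκ hε
    _ = fstar + ε + τ (fstar + ε) ^ κ * I / Z := by
        field_simp
        ring
    _ ≤ fstar + ε + τ (fstar + ε) ^ κ * I / (τ c ^ κ * μ.real {x | f x < c}) := by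
        gcongr
    _ = fstar + ε + (τ (fstar + ε) / τ c) ^ κ * (I / μ.real {x | f x < c}) := by
        rw [Real.div_rpow (hτpos _).le (hτpos _).le]
        field_simp

theorem tendsto_nascentMinimaMean (hτ : StrictAnti τ) (hτpos : ∀ y, 0 < τ y)
    (hf : Integrable f μ) (hmin : ∀ᵐ x ∂μ, fstar ≤ f x)
    (hpos : ∀ c, fstar < c → 0 < μ {x | f x < c}) :
    Tendsto (nascentMinimaMean μ τ f) atTop (𝓝 fstar) := by
  have hposReal : ∀ c, fstar < c → 0 < μ.real {x | f x < c} := fun c hc =>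
    ENNReal.toReal_pos (hpos c hc).ne' (measure_ne_top μ _)
  refine tendsto_order.2 ⟨fun l hl => ?_, fun u hu => ?_⟩
  · filter_upwards [eventually_ge_atTop 0] with κ hκ
    refine hl.trans_le (le_nascentMinimaMean hτ.antitone hτpos hf hmin hκ ?_)
    have hw := integrable_rpow_comp hτ.antitone hτpos hf.aemeasurable hmin hκ
    exact (mul_pos (Real.rpow_pos_of_pos (hτpos _) κ) (hposReal (fstar + 1) (by linarith))).trans_le
      (rpow_mul_measureReal_lt_le_integral_rpow_comp hτ.antitone hτpos hw hκ _)
  · set ε := (u - fstar) / 2 with hε_def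
    set c := fstar + ε / 2 with hc_def
    have hε : 0 < ε := half_pos (sub_pos.2 hu)
    have hc : 0 < μ.real {x | f x < c} := hposReal c (by linarith)
    have hratio : Tendsto (fun κ : ℝ => (τ (fstar + ε) / τ c) ^ κ) atTop (𝓝 0) :=
      tendsto_rpow_atTop_of_base_lt_one _
        (by linarith [div_pos (hτpos (fstar + ε)) (hτpos c)])
        ((div_lt_one (hτpos c)).2 (hτ (by linarith)))
    have hsmall :=
      (hratio.mul_const ((∫ x, (f x - fstar) ∂μ) / μ.real {x | f x < c})).eventually_lt_const
        (by rw [zero_mul]; exact hε)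
    filter_upwards [eventually_ge_atTop 0, hsmall] with κ hκ hκsmall
    calc nascentMinimaMean μ τ f κ
        ≤ _ := nascentMinimaMean_le hτ.antitone hτpos hf hmin hκ hε.le hc
      _ < u := by linarith

end NascentMinimaMean

lemma measure_restrict_setOf_lt_pos {X : Type*} [TopologicalSpace X] [MeasurableSpace X]
    {μ : Measure X} [μ.IsOpenPosMeasure] {s : Set X} {f : X → ℝ} (hs : s ⊆ closure (interior s))
    (hf : ContinuousOn f s) {x₀ : X} {c : ℝ} (hx₀ : x₀ ∈ s) (hc : f x₀ < c) :
    0 < μ.restrict s {x | f x < c} := by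
  obtain ⟨U, hU, hx₀U, hUs⟩ := mem_nhdsWithin.1 (hf x₀ hx₀ (Iio_mem_nhds hc))
  have hne : (U ∩ interior s).Nonempty := mem_closure_iff.1 (hs hx₀) U hU hx₀U
  calc 0 < μ (U ∩ interior s) := (hU.inter isOpen_interior).measure_pos μ hne
    _ ≤ μ ({x | f x < c} ∩ s) := measure_mono fun x hx =>
        ⟨hUs ⟨hx.1, interior_subset hx.2⟩, interior_subset hx.2⟩
    _ ≤ μ.restrict s {x | f x < c} := Measure.le_restrict_apply _ _

theorem nascent_minima_expectation_tendsto_min_general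
    (d : ℕ)
    (Ω : Set (EuclideanSpace ℝ (Fin d)))
    (hΩc : IsCompact Ω)
    (hΩcl : Ω = closure (interior Ω))
    (f : EuclideanSpace ℝ (Fin d) → ℝ)
    (hf : ContinuousOn f Ω)
    (fstar : ℝ) (hmin : IsLeast (f '' Ω) fstar)
    (τ : ℝ → ℝ) (hτ : StrictAnti τ) (hτpos : ∀ y, 0 < τ y)
    (m : ℝ → EuclideanSpace ℝ (Fin d) → ℝ)
    (hm : ∀ κ x, m κ x = τ (f x) ^ κ / ∫ t in Ω, τ (f t) ^ κ) :
    Tendsto (fun κ : ℝ => ∫ x in Ω, f x * m κ x) atTop (𝓝 fstar) := by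
  obtain ⟨x₀, hx₀, rfl⟩ := hmin.1
  have : IsFiniteMeasure (volume.restrict Ω) := isFiniteMeasure_restrict.2 hΩc.measure_lt_top.ne
  have hmean : ∀ κ, nascentMinimaMean (volume.restrict Ω) τ f κ = ∫ x in Ω, f x * m κ x :=
    fun κ => by simp only [hm, nascentMinimaMean, mul_div_assoc', integral_div]
  refine (tendsto_nascentMinimaMean hτ hτpos (hf.integrableOn_compact hΩc) ?_
    fun c hc => measure_restrict_setOf_lt_pos hΩcl.subset hf hx₀ hc).congr hmean
  exact ae_restrict_of_forall_mem hΩc.measurableSet fun x hx => hmin.2 ⟨x, hx, rfl⟩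

/-- The expectation of `f` under the nascent minima density converges to the
global minimum value `f*` as `κ → ∞`. -/
theorem nascent_minima_expectation_tendsto_min
    (d : ℕ) (hd : 1 ≤ d)
    (Ω : Set (EuclideanSpace ℝ (Fin d)))
    (hΩc : IsCompact Ω)
    (hΩcl : Ω = closure (interior Ω))
    (hΩint : (interior Ω).Nonempty)
    (f : EuclideanSpace ℝ (Fin d) → ℝ)
    (hf : ContinuousOn f Ω)
    (fstar : ℝ) (hmin : IsLeast (f '' Ω) fstar)
    (τ : ℝ → ℝ) (hτ : StrictAnti τ) (hτpos : ∀ y, 0 < τ y)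
    (m : ℝ → EuclideanSpace ℝ (Fin d) → ℝ)
    (hm : ∀ κ x, m κ x = τ (f x) ^ κ / ∫ t in Ω, τ (f t) ^ κ) :
    Tendsto (fun κ : ℝ => ∫ x in Ω, f x * m κ x) atTop (𝓝 fstar) :=
  nascent_minima_expectation_tendsto_min_general d Ω hΩc hΩcl f hf fstar hmin τ hτ hτpos m hm
end

section
/- If f has a unique global minimizer on Ω, i.e. X* = {x*}, then the barycenter of the nascent minima density converges to that minimizer: lim_{κ → ∞} ∫_Ω x · m^(κ)(x) dx = x* (the limit is taken in ℝ^d, componentwise or in norm). -/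
/-!
Off a ball around `x*`, compactness and uniqueness of the minimizer give `f ≥ c` for some
`c > f*`, so the weight `τ ∘ f` is at most `τ c` there. Since `Ω` is the closure of its interior,
`x*` is adherent to a nonempty open `V ⊆ Ω` on which `f < (f* + c) / 2`, so the weight is at least
`τ ((f* + c) / 2) > τ c` on a set of positive measure. The relative mass of `(τ ∘ f) ^ κ` outside
the ball is therefore `O((τ c / τ ((f* + c) / 2)) ^ κ) → 0`, and barycenters of weights
concentrating at `x*` on the bounded set `Ω` converge to `x*`.
-/

open MeasureTheory Filter Topology Set Metric
open scoped ENNReal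

theorem exists_isOpen_subset_of_eventually_nhdsWithin {X : Type*} [TopologicalSpace X]
    {s : Set X} {x : X} {p : X → Prop} (hx : x ∈ closure (interior s))
    (hp : ∀ᶠ y in 𝓝[s] x, p y) : ∃ V, IsOpen V ∧ V.Nonempty ∧ V ⊆ s ∧ ∀ y ∈ V, p y := by
  obtain ⟨U, hUo, hxU, hU⟩ := mem_nhdsWithin.1 hp
  exact ⟨U ∩ interior s, hUo.inter isOpen_interior, mem_closure_iff.1 hx U hUo hxU,
    fun y hy => interior_subset hy.2, fun y hy => hU ⟨hy.1, interior_subset hy.2⟩⟩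

section SetIntegral

variable {α E : Type*} [MeasurableSpace α] [NormedAddCommGroup E] [NormedSpace ℝ E]
  {μ : Measure α} {s t : Set α} {w : α → ℝ} {φ : α → E}

theorem setIntegral_div_smul_sub [CompleteSpace E] (hw : IntegrableOn w s μ)
    (hwφ : IntegrableOn (fun x => w x • φ x) s μ) (hZ : ∫ x in s, w x ∂μ ≠ 0) (c : E) :
    ∫ x in s, (w x / ∫ t in s, w t ∂μ) • φ x ∂μ - c =
      (∫ t in s, w t ∂μ)⁻¹ • ∫ x in s, w x • (φ x - c) ∂μ := by
  simp_rw [div_eq_inv_mul, mul_smul, smul_sub]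
  rw [integral_smul, integral_sub hwφ (hw.smul_const c), integral_smul_const, smul_sub,
    smul_smul, inv_mul_cancel₀ hZ, one_smul]

theorem norm_setIntegral_smul_le (hs : MeasurableSet s) (ht : MeasurableSet t)
    (hw : IntegrableOn w s μ) (hw0 : ∀ x ∈ s, 0 ≤ w x) (hφ : AEStronglyMeasurable φ (μ.restrict s))
    {ρ D : ℝ} (hρ : 0 ≤ ρ) (hφρ : ∀ x ∈ s ∩ t, ‖φ x‖ ≤ ρ) (hφD : ∀ x ∈ s \ t, ‖φ x‖ ≤ D) :
    ‖∫ x in s, w x • φ x ∂μ‖ ≤ ρ * ∫ x in s, w x ∂μ + D * ∫ x in s \ t, w x ∂μ := by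
  have hφ_bdd : ∀ x ∈ s, ‖φ x‖ ≤ max ρ D := fun x hx => by
    by_cases hxt : x ∈ t
    exacts [(hφρ x ⟨hx, hxt⟩).trans (le_max_left _ _), (hφD x ⟨hx, hxt⟩).trans (le_max_right _ _)]
  have hwφ : IntegrableOn (fun x => w x • φ x) s μ :=
    hw.smul_bdd (max ρ D) hφ (ae_restrict_of_forall_mem hs hφ_bdd)
  have hnorm : ∀ x ∈ s, ‖w x • φ x‖ = w x * ‖φ x‖ := fun x hx => by
    rw [norm_smul, Real.norm_of_nonneg (hw0 x hx)]
  have hint : IntegrableOn (fun x => ‖w x • φ x‖) s μ := hwφ.norm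
  calc ‖∫ x in s, w x • φ x ∂μ‖
      ≤ ∫ x in s, ‖w x • φ x‖ ∂μ := norm_integral_le_integral_norm _
    _ = (∫ x in s ∩ t, ‖w x • φ x‖ ∂μ) + ∫ x in s \ t, ‖w x • φ x‖ ∂μ :=
      (integral_inter_add_sdiff ht hint).symm
    _ ≤ (∫ x in s ∩ t, ρ * w x ∂μ) + ∫ x in s \ t, D * w x ∂μ := by
      refine add_le_add ?_ ?_
      · refine setIntegral_mono_on (hint.mono_set inter_subset_left)
          ((hw.mono_set inter_subset_left).const_mul ρ) (hs.inter ht) fun x hx => ?_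
        rw [hnorm x hx.1, mul_comm ρ]
        exact mul_le_mul_of_nonneg_left (hφρ x hx) (hw0 x hx.1)
      · refine setIntegral_mono_on (hint.mono_set sdiff_subset)
          ((hw.mono_set sdiff_subset).const_mul D) (hs.diff ht) fun x hx => ?_
        rw [hnorm x hx.1, mul_comm D]
        exact mul_le_mul_of_nonneg_left (hφD x hx) (hw0 x hx.1)
    _ ≤ ρ * (∫ x in s, w x ∂μ) + D * ∫ x in s \ t, w x ∂μ := by
      rw [integral_const_mul, integral_const_mul]
      refine add_le_add_left (mul_le_mul_of_nonneg_left ?_ hρ) _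
      exact setIntegral_mono_set hw (ae_restrict_of_forall_mem hs hw0)
        inter_subset_left.eventuallyLE

theorem setIntegral_pos_of_forall_pos {f : α → ℝ} (hs : MeasurableSet s)
    (hf : IntegrableOn f s μ) (hpos : ∀ x ∈ s, 0 < f x) (hμs : 0 < μ s) :
    0 < ∫ x in s, f x ∂μ := by
  rw [setIntegral_pos_iff_support_of_nonneg_ae
    (ae_restrict_of_forall_mem hs fun x hx => (hpos x hx).le) hf]
  exact hμs.trans_le (measure_mono fun x hx => ⟨(hpos x hx).ne', hx⟩)

theorem integrableOn_rpow_of_nonneg_of_le {g : α → ℝ} {B κ : ℝ} (hs : MeasurableSet s)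
    (hμs : μ s ≠ ∞) (hg : AEMeasurable g (μ.restrict s)) (hg0 : ∀ x ∈ s, 0 ≤ g x)
    (hgB : ∀ x ∈ s, g x ≤ B) (hκ : 0 ≤ κ) : IntegrableOn (fun x => g x ^ κ) s μ :=
  .of_bound hμs.lt_top (hg.pow_const κ).aestronglyMeasurable (B ^ κ)
    (ae_restrict_of_forall_mem hs fun x hx => by
      rw [Real.norm_of_nonneg (Real.rpow_nonneg (hg0 x hx) κ)]
      exact Real.rpow_le_rpow (hg0 x hx) (hgB x hx) hκ)

end SetIntegral

theorem tendsto_setIntegral_div_smul_of_tendsto_tail {E ι : Type*} [NormedAddCommGroup E]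
    [NormedSpace ℝ E] [CompleteSpace E] [SecondCountableTopology E] [MeasurableSpace E]
    [BorelSpace E] {μ : Measure E}
    {s : Set E} {l : Filter ι} {w : ι → E → ℝ} {c : E}
    (hs : MeasurableSet s) (hsb : Bornology.IsBounded s)
    (hw : ∀ᶠ i in l, IntegrableOn (w i) s μ ∧ (∀ x ∈ s, 0 ≤ w i x) ∧ 0 < ∫ x in s, w i x ∂μ)
    (htail : ∀ ρ > 0,
      Tendsto (fun i => (∫ x in s \ ball c ρ, w i x ∂μ) / ∫ x in s, w i x ∂μ) l (𝓝 0)) :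
    Tendsto (fun i => ∫ x in s, (w i x / ∫ t in s, w i t ∂μ) • x ∂μ) l (𝓝 c) := by
  obtain ⟨R, hR⟩ := hsb.exists_norm_le
  have hD : ∀ x ∈ s, ‖x - c‖ ≤ R + ‖c‖ := fun x hx =>
    (norm_sub_le x c).trans (add_le_add_left (hR x hx) _)
  rw [Metric.tendsto_nhds]
  intro ε hε
  have hsmall := ((htail (ε / 2) (half_pos hε)).const_mul (R + ‖c‖)).eventually_lt_const
    (show (R + ‖c‖) * 0 < ε / 2 by linarith)
  filter_upwards [hw, hsmall] with i ⟨hwi, hw0, hZ⟩ hi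
  have hwx : IntegrableOn (fun x => w i x • x) s μ :=
    hwi.smul_bdd R aestronglyMeasurable_id (ae_restrict_of_forall_mem hs hR)
  have hbound := norm_setIntegral_smul_le (φ := fun x => x - c) hs measurableSet_ball hwi hw0
    (aestronglyMeasurable_id.sub aestronglyMeasurable_const) (half_pos hε).le
    (fun x hx => (mem_ball_iff_norm.1 hx.2).le) (fun x hx => hD x hx.1)
  rw [dist_eq_norm, setIntegral_div_smul_sub hwi hwx hZ.ne', norm_smul, norm_inv,
    Real.norm_of_nonneg hZ.le]
  calc _ ≤ (∫ x in s, w i x ∂μ)⁻¹ * (ε / 2 * (∫ x in s, w i x ∂μ) +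
        (R + ‖c‖) * ∫ x in s \ ball c (ε / 2), w i x ∂μ) := by gcongr
    _ = ε / 2 + (R + ‖c‖) * ((∫ x in s \ ball c (ε / 2), w i x ∂μ) / ∫ x in s, w i x ∂μ) := by
      field_simp
    _ < ε := by linarith

theorem tendsto_setIntegral_rpow_div_setIntegral_rpow {α : Type*} [MeasurableSpace α]
    {μ : Measure α} {s A V : Set α} {g : α → ℝ} {a b : ℝ}
    (hs : MeasurableSet s) (hμs : μ s ≠ ∞) (hAs : A ⊆ s) (hV : MeasurableSet V) (hVs : V ⊆ s)
    (hμV : 0 < μ V) (hg : ∀ κ : ℝ, 0 ≤ κ → IntegrableOn (fun x => g x ^ κ) s μ)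
    (hg0 : ∀ x ∈ s, 0 ≤ g x) (ha : 0 ≤ a) (hab : a < b)
    (hgA : ∀ x ∈ A, g x ≤ a) (hgV : ∀ x ∈ V, b ≤ g x) :
    Tendsto (fun κ : ℝ => (∫ x in A, g x ^ κ ∂μ) / ∫ x in s, g x ^ κ ∂μ) atTop (𝓝 0) := by
  have hb : 0 < b := ha.trans_lt hab
  have hμV' : 0 < μ.real V :=
    ENNReal.toReal_pos hμV.ne' (ne_top_of_le_ne_top hμs (measure_mono hVs))
  have hlim : Tendsto (fun κ : ℝ => μ.real A / μ.real V * (a / b) ^ κ) atTop (𝓝 0) := by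
    simpa using (tendsto_rpow_atTop_of_base_lt_one _ (by linarith [div_nonneg ha hb.le])
      ((div_lt_one hb).2 hab)).const_mul (μ.real A / μ.real V)
  refine squeeze_zero_norm' ?_ hlim
  filter_upwards [eventually_ge_atTop 0] with κ hκ
  have hnum : ‖∫ x in A, g x ^ κ ∂μ‖ ≤ a ^ κ * μ.real A :=
    norm_setIntegral_le_of_norm_le_const ((measure_mono hAs).trans_lt hμs.lt_top) fun x hx => by
      rw [Real.norm_of_nonneg (Real.rpow_nonneg (hg0 x (hAs hx)) κ)]
      exact Real.rpow_le_rpow (hg0 x (hAs hx)) (hgA x hx) hκ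
  have hden : b ^ κ * μ.real V ≤ ∫ x in s, g x ^ κ ∂μ :=
    (setIntegral_ge_of_const_le_real hV (ne_top_of_le_ne_top hμs (measure_mono hVs))
      (fun x hx => Real.rpow_le_rpow hb.le (hgV x hx) hκ) ((hg κ hκ).mono_set hVs)).trans
    (setIntegral_mono_set (hg κ hκ)
      (ae_restrict_of_forall_mem hs fun x hx => Real.rpow_nonneg (hg0 x hx) κ) hVs.eventuallyLE)
  have hpos : 0 < b ^ κ * μ.real V := mul_pos (Real.rpow_pos_of_pos hb κ) hμV'
  rw [norm_div, Real.norm_of_nonneg (hpos.le.trans hden)]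
  calc _ ≤ a ^ κ * μ.real A / (b ^ κ * μ.real V) :=
        div_le_div₀ (by positivity) hnum hpos hden
    _ = μ.real A / μ.real V * (a / b) ^ κ := by
      rw [Real.div_rpow ha hb.le]
      field_simp

theorem nascent_minima_barycenter_tendsto_minimizer_general
    (d : ℕ)
    (Ω : Set (EuclideanSpace ℝ (Fin d)))
    (hΩc : IsCompact Ω)
    (hΩcl : Ω = closure (interior Ω))
    (hΩint : (interior Ω).Nonempty)
    (f : EuclideanSpace ℝ (Fin d) → ℝ)
    (hf : ContinuousOn f Ω)
    (fstar : ℝ) (hmin : IsLeast (f '' Ω) fstar)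
    (τ : ℝ → ℝ) (hτ : StrictAnti τ) (hτpos : ∀ y, 0 < τ y)
    (m : ℝ → EuclideanSpace ℝ (Fin d) → ℝ)
    (hm : ∀ κ x, m κ x = τ (f x) ^ κ / ∫ t in Ω, τ (f t) ^ κ)
    (xstar : EuclideanSpace ℝ (Fin d))
    (hX : {x | x ∈ Ω ∧ f x = fstar} = {xstar}) :
    Tendsto (fun κ : ℝ => ∫ x in Ω, m κ x • x) atTop (𝓝 xstar) := by
  obtain ⟨hxΩ, hfx⟩ : xstar ∈ Ω ∧ f xstar = fstar := hX.symm.subset (mem_singleton xstar)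
  have hΩm := hΩc.measurableSet
  have hfstar : ∀ x ∈ Ω, fstar ≤ f x := fun x hx => hmin.2 ⟨x, hx, rfl⟩
  have hint : ∀ κ : ℝ, 0 ≤ κ → IntegrableOn (fun x => τ (f x) ^ κ) Ω := fun κ =>
    integrableOn_rpow_of_nonneg_of_le hΩm hΩc.measure_lt_top.ne
      (hτ.antitone.measurable.comp_aemeasurable (hf.aemeasurable hΩm))
      (fun x _ => (hτpos _).le) fun x hx => hτ.antitone (hfstar x hx)
  have hvol : 0 < volume Ω :=
    (isOpen_interior.measure_pos volume hΩint).trans_le (measure_mono interior_subset)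
  simp_rw [hm]
  refine tendsto_setIntegral_div_smul_of_tendsto_tail hΩm hΩc.isBounded ?_ fun ρ hρ => ?_
  · filter_upwards [eventually_ge_atTop 0] with κ hκ
    have hpos : ∀ x, 0 < τ (f x) ^ κ := fun x => Real.rpow_pos_of_pos (hτpos _) κ
    exact ⟨hint κ hκ, fun x _ => (hpos x).le,
      setIntegral_pos_of_forall_pos hΩm (hint κ hκ) (fun x _ => hpos x) hvol⟩
  · obtain ⟨c, hfc, hc⟩ := (hΩc.diff isOpen_ball).exists_forall_le' (hf.mono sdiff_subset)
      (a := fstar) fun x hx => (hfstar x hx.1).lt_of_ne fun h =>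
        hx.2 (by rw [mem_singleton_iff.1 (hX.subset ⟨hx.1, h.symm⟩)]; exact mem_ball_self hρ)
    obtain ⟨V, hVo, hVne, hVΩ, hV⟩ := exists_isOpen_subset_of_eventually_nhdsWithin
      (hΩcl ▸ hxΩ : xstar ∈ closure (interior Ω))
      ((hf xstar hxΩ).eventually (eventually_lt_nhds (a := f xstar) (b := (fstar + c) / 2)
        (by linarith)))
    exact tendsto_setIntegral_rpow_div_setIntegral_rpow hΩm hΩc.measure_lt_top.ne sdiff_subset
      hVo.measurableSet hVΩ (hVo.measure_pos volume hVne) hint (fun x _ => (hτpos _).le)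
      (hτpos _).le (hτ (show (fstar + c) / 2 < c by linarith)) (fun x hx => hτ.antitone (hc x hx))
      fun y hy => (hτ (hV y hy)).le

/-- If `f` has a unique global minimizer `x*` on `Ω`, then the barycenter of
the nascent minima density converges to `x*` as `κ → ∞`. -/
theorem nascent_minima_barycenter_tendsto_minimizer
    (d : ℕ) (hd : 1 ≤ d)
    (Ω : Set (EuclideanSpace ℝ (Fin d)))
    (hΩc : IsCompact Ω)
    (hΩcl : Ω = closure (interior Ω))
    (hΩint : (interior Ω).Nonempty)
    (f : EuclideanSpace ℝ (Fin d) → ℝ)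
    (hf : ContinuousOn f Ω)
    (fstar : ℝ) (hmin : IsLeast (f '' Ω) fstar)
    (τ : ℝ → ℝ) (hτ : StrictAnti τ) (hτpos : ∀ y, 0 < τ y)
    (m : ℝ → EuclideanSpace ℝ (Fin d) → ℝ)
    (hm : ∀ κ x, m κ x = τ (f x) ^ κ / ∫ t in Ω, τ (f t) ^ κ)
    (xstar : EuclideanSpace ℝ (Fin d))
    (hX : {x | x ∈ Ω ∧ f x = fstar} = {xstar}) :
    Tendsto (fun κ : ℝ => ∫ x in Ω, m κ x • x) atTop (𝓝 xstar) :=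
  nascent_minima_barycenter_tendsto_minimizer_general d Ω hΩc hΩcl hΩint f hf fstar hmin τ hτ hτpos
    m hm xstar hX
end

section
/- The mass of the nascent minima density concentrates on sublevel sets of f near the global minimum: for every δ > 0, lim_{κ → ∞} ∫_{{x ∈ Ω : f(x) ≥ f* + δ}} m^(κ)(x) dx = 0. -/
/-!
If `g ≤ a` on `s` and `g ≥ b > a` on a set `u ⊆ t` of positive finite measure, then
`∫_s g^κ / ∫_t g^κ ≤ (a / b)^κ · μ(s) / μ(u)`, which decays geometrically in `κ`. For the nascent
minima density take `g = τ ∘ f`, `a = τ (f* + δ)`, `b = τ (f* + δ / 2)`, and for `u` an open piece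
of the interior of `Ω` on which `f < f* + δ / 2`; it exists because `Ω` is the closure of its
interior and `f` is continuous at a minimiser.
-/

open MeasureTheory Filter Topology

theorem ContinuousOn.exists_isOpen_nonempty_subset_forall_lt {X β : Type*} [TopologicalSpace X]
    [TopologicalSpace β] [LinearOrder β] [ClosedIciTopology β] {f : X → β} {s : Set X}
    (hf : ContinuousOn f s) (hs : s ⊆ closure (interior s)) {x₀ : X} (hx₀ : x₀ ∈ s) {c : β}
    (hc : f x₀ < c) : ∃ u, IsOpen u ∧ u.Nonempty ∧ u ⊆ s ∧ ∀ x ∈ u, f x < c := by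
  obtain ⟨o, ho, hx₀o, hof⟩ := mem_nhdsWithin.mp (hf x₀ hx₀ (Iio_mem_nhds hc))
  refine ⟨o ∩ interior s, ho.inter isOpen_interior, mem_closure_iff.mp (hs hx₀) o ho hx₀o,
    fun x hx => interior_subset hx.2, fun x hx => hof ⟨hx.1, interior_subset hx.2⟩⟩

section RpowConcentration

variable {α : Type*} [MeasurableSpace α] {μ : Measure α} {g : α → ℝ} {s t u : Set α} {a b κ : ℝ}

theorem setIntegral_rpow_le_rpow_mul_measureReal (hg : 0 ≤ g) (hκ : 0 ≤ κ) (hμs : μ s ≠ ⊤)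
    (hga : ∀ x ∈ s, g x ≤ a) : ∫ x in s, g x ^ κ ∂μ ≤ a ^ κ * μ.real s := by
  refine (Real.le_norm_self _).trans
    (norm_setIntegral_le_of_norm_le_const hμs.lt_top fun x hx => ?_)
  rw [Real.norm_of_nonneg (Real.rpow_nonneg (hg x) κ)]
  exact Real.rpow_le_rpow (hg x) (hga x hx) hκ

theorem rpow_mul_measureReal_le_setIntegral_rpow (hg : 0 ≤ g) (hκ : 0 ≤ κ) (hb : 0 ≤ b)
    (hint : IntegrableOn (fun x => g x ^ κ) t μ) (hu : MeasurableSet u) (hut : u ⊆ t)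
    (hμu : μ u ≠ ⊤) (hgb : ∀ x ∈ u, b ≤ g x) : b ^ κ * μ.real u ≤ ∫ x in t, g x ^ κ ∂μ :=
  calc b ^ κ * μ.real u ≤ ∫ x in u, g x ^ κ ∂μ :=
        setIntegral_ge_of_const_le_real hu hμu
          (fun x hx => Real.rpow_le_rpow hb (hgb x hx) hκ) (hint.mono_set hut)
    _ ≤ ∫ x in t, g x ^ κ ∂μ :=
        setIntegral_mono_set hint (ae_of_all _ fun x => Real.rpow_nonneg (hg x) κ)
          hut.eventuallyLE

theorem setIntegral_rpow_div_setIntegral_rpow_le (hg : 0 ≤ g) (hκ : 0 ≤ κ) (hμs : μ s ≠ ⊤)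
    (ha : 0 ≤ a) (hga : ∀ x ∈ s, g x ≤ a) (hb : 0 < b) (hu : MeasurableSet u) (hut : u ⊆ t)
    (hμu : μ u ≠ ⊤) (hμu₀ : μ u ≠ 0) (hgb : ∀ x ∈ u, b ≤ g x) :
    (∫ x in s, g x ^ κ ∂μ) / ∫ x in t, g x ^ κ ∂μ ≤ (a / b) ^ κ * (μ.real s / μ.real u) := by
  have hbκ : 0 < b ^ κ := Real.rpow_pos_of_pos hb κ
  have hμu_pos : 0 < μ.real u := ENNReal.toReal_pos hμu₀ hμu
  by_cases hint : IntegrableOn (fun x => g x ^ κ) t μ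
  · have hlow := rpow_mul_measureReal_le_setIntegral_rpow hg hκ hb.le hint hu hut hμu hgb
    calc (∫ x in s, g x ^ κ ∂μ) / ∫ x in t, g x ^ κ ∂μ
        ≤ a ^ κ * μ.real s / (b ^ κ * μ.real u) :=
          div_le_div₀ (by positivity) (setIntegral_rpow_le_rpow_mul_measureReal hg hκ hμs hga)
            (by positivity) hlow
      _ = (a / b) ^ κ * (μ.real s / μ.real u) := by
          rw [Real.div_rpow ha hb.le]
          field_simp
  -- a non-integrable denominator has the junk value `0`, and so does the quotient
  · rw [integral_undef hint, div_zero]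
    positivity

theorem tendsto_setIntegral_rpow_div_setIntegral_rpow_atTop (hg : 0 ≤ g) (hμs : μ s ≠ ⊤)
    (ha : 0 ≤ a) (hga : ∀ x ∈ s, g x ≤ a) (hab : a < b) (hu : MeasurableSet u) (hut : u ⊆ t)
    (hμu : μ u ≠ ⊤) (hμu₀ : μ u ≠ 0) (hgb : ∀ x ∈ u, b ≤ g x) :
    Tendsto (fun κ : ℝ => (∫ x in s, g x ^ κ ∂μ) / ∫ x in t, g x ^ κ ∂μ) atTop (𝓝 0) := by
  have hb : 0 < b := ha.trans_lt hab
  have hgeom : Tendsto (fun κ : ℝ => (a / b) ^ κ * (μ.real s / μ.real u)) atTop (𝓝 0) := by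
    simpa using (tendsto_rpow_atTop_of_base_lt_one _ (by linarith [div_nonneg ha hb.le])
      ((div_lt_one hb).mpr hab)).mul_const (μ.real s / μ.real u)
  refine squeeze_zero' ?_ ?_ hgeom
  · exact .of_forall fun κ => div_nonneg (integral_nonneg fun x => Real.rpow_nonneg (hg x) κ)
      (integral_nonneg fun x => Real.rpow_nonneg (hg x) κ)
  · filter_upwards [eventually_ge_atTop 0] with κ hκ
    exact setIntegral_rpow_div_setIntegral_rpow_le hg hκ hμs ha hga hb hu hut hμu hμu₀ hgb

end RpowConcentration

theorem nascent_minima_mass_concentration_general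
    (d : ℕ)
    (Ω : Set (EuclideanSpace ℝ (Fin d)))
    (hΩc : IsCompact Ω)
    (hΩcl : Ω = closure (interior Ω))
    (f : EuclideanSpace ℝ (Fin d) → ℝ)
    (hf : ContinuousOn f Ω)
    (fstar : ℝ) (hmin : IsLeast (f '' Ω) fstar)
    (τ : ℝ → ℝ) (hτ : StrictAnti τ) (hτpos : ∀ y, 0 < τ y)
    (m : ℝ → EuclideanSpace ℝ (Fin d) → ℝ)
    (hm : ∀ κ x, m κ x = τ (f x) ^ κ / ∫ t in Ω, τ (f t) ^ κ) :
    ∀ δ > (0 : ℝ),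
      Tendsto (fun κ : ℝ => ∫ x in {x | x ∈ Ω ∧ fstar + δ ≤ f x}, m κ x) atTop (𝓝 0) := by
  intro δ hδ
  obtain ⟨x₀, hx₀, rfl⟩ := hmin.1
  obtain ⟨W, hWo, hWne, hWΩ, hfW⟩ := hf.exists_isOpen_nonempty_subset_forall_lt hΩcl.subset hx₀
    (show f x₀ < f x₀ + δ / 2 by linarith)
  have hμΩ : volume Ω ≠ ⊤ := hΩc.measure_lt_top.ne
  simp_rw [hm, integral_div]
  exact tendsto_setIntegral_rpow_div_setIntegral_rpow_atTop (fun x => (hτpos (f x)).le)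
    (measure_ne_top_of_subset (fun x hx => hx.1) hμΩ) (hτpos _).le (fun x hx => hτ.antitone hx.2)
    (hτ (by linarith)) hWo.measurableSet hWΩ (measure_ne_top_of_subset hWΩ hμΩ)
    (hWo.measure_ne_zero volume hWne) (fun x hx => hτ.antitone (hfW x hx).le)

/-- The mass of the nascent minima density concentrates near the global
minimum: for every `δ > 0`, the mass of `{x ∈ Ω | f x ≥ f* + δ}` tends to `0` as
`κ → ∞`. -/
theorem nascent_minima_mass_concentration
    (d : ℕ) (hd : 1 ≤ d)
    (Ω : Set (EuclideanSpace ℝ (Fin d)))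
    (hΩc : IsCompact Ω)
    (hΩcl : Ω = closure (interior Ω))
    (hΩint : (interior Ω).Nonempty)
    (f : EuclideanSpace ℝ (Fin d) → ℝ)
    (hf : ContinuousOn f Ω)
    (fstar : ℝ) (hmin : IsLeast (f '' Ω) fstar)
    (τ : ℝ → ℝ) (hτ : StrictAnti τ) (hτpos : ∀ y, 0 < τ y)
    (m : ℝ → EuclideanSpace ℝ (Fin d) → ℝ)
    (hm : ∀ κ x, m κ x = τ (f x) ^ κ / ∫ t in Ω, τ (f t) ^ κ) :
    ∀ δ > (0 : ℝ),
      Tendsto (fun κ : ℝ => ∫ x in {x | x ∈ Ω ∧ fstar + δ ≤ f x}, m κ x) atTop (𝓝 0) :=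
  nascent_minima_mass_concentration_general d Ω hΩc hΩcl f hf fstar hmin τ hτ hτpos m hm
end

section
/- Stein's identity on a box: the expectation of the Stein operator applied to a function in the Stein class of μ vanishes. Precisely, ∫_Ω (⟨∇ log p(x), φ(x)⟩ + div φ(x)) p(x) dx = 0, where div φ(x) is the trace of the Fréchet derivative of φ at x (the sum of the diagonal entries of its Jacobian). -/
/-!
Where `p ≠ 0`, the product rule gives `(⟨∇ log p, φ⟩ + div φ) p = ⟨∇p, φ⟩ + p div φ = div (p φ)`,
so the integrand is the divergence of `p φ`. By the divergence theorem on the box, its integral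
is the boundary flux of `p φ`, which vanishes because `p φ = 0` on every face.
-/

open MeasureTheory Topology

theorem LinearMap.continuous_trace_toLinearMap {𝕜 E : Type*} [NontriviallyNormedField 𝕜]
    [CompleteSpace 𝕜] [NormedAddCommGroup E] [NormedSpace 𝕜 E] [FiniteDimensional 𝕜 E] :
    Continuous fun L : E →L[𝕜] E => LinearMap.trace 𝕜 E L.toLinearMap :=
  (LinearMap.trace 𝕜 E ∘ₗ ContinuousLinearMap.coeLM 𝕜).continuous_of_finiteDimensional

section ProductRule

variable {E : Type*} [NormedAddCommGroup E] [InnerProductSpace ℝ E] [FiniteDimensional ℝ E]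
  {p : E → ℝ} {φ : E → E} {x : E}

theorem trace_fderiv_smul (hp : DifferentiableAt ℝ p x) (hφ : DifferentiableAt ℝ φ x) :
    LinearMap.trace ℝ E (fderiv ℝ (fun y => p y • φ y) x).toLinearMap
      = p x * LinearMap.trace ℝ E (fderiv ℝ φ x).toLinearMap + fderiv ℝ p x (φ x) := by
  rw [fderiv_fun_smul hp hφ, ContinuousLinearMap.toLinearMap_add, map_add,
    ContinuousLinearMap.toLinearMap_smul, map_smul, smul_eq_mul,
    ContinuousLinearMap.coe_smulRight, LinearMap.trace_smulRight]
  rfl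

theorem inner_gradient_log (hp : DifferentiableAt ℝ p x) (hpx : p x ≠ 0) (v : E) :
    inner ℝ (gradient (fun y => Real.log (p y)) x) v = (p x)⁻¹ * fderiv ℝ p x v := by
  rw [inner_gradient_left, (hp.hasFDerivAt.log hpx).fderiv]
  rfl

theorem stein_integrand_eq_trace_fderiv_smul (hp : DifferentiableAt ℝ p x)
    (hφ : DifferentiableAt ℝ φ x) (hpx : p x ≠ 0) :
    (inner ℝ (gradient (fun y => Real.log (p y)) x) (φ x) +
        LinearMap.trace ℝ E (fderiv ℝ φ x).toLinearMap) * p x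
      = LinearMap.trace ℝ E (fderiv ℝ (fun y => p y • φ y) x).toLinearMap := by
  rw [trace_fderiv_smul hp hφ, inner_gradient_log hp hpx]
  field_simp
  ring

end ProductRule

namespace EuclideanSpace

variable {d : ℕ} {a b : Fin d → ℝ}

theorem trace_eq_sum_apply_single
    (L : EuclideanSpace ℝ (Fin d) →L[ℝ] EuclideanSpace ℝ (Fin d)) :
    LinearMap.trace ℝ (EuclideanSpace ℝ (Fin d)) L.toLinearMap
      = ∑ i, L (EuclideanSpace.single i 1) i := by
  rw [LinearMap.trace_eq_sum_inner _ (EuclideanSpace.basisFun (Fin d) ℝ)]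
  simp [EuclideanSpace.inner_single_left]

theorem isCompact_preimage_Icc :
    IsCompact (WithLp.ofLp ⁻¹' Set.Icc a b : Set (EuclideanSpace ℝ (Fin d))) :=
  (PiLp.homeomorph 2 _).isCompact_preimage.2 isCompact_Icc

theorem interior_preimage_Icc :
    interior (WithLp.ofLp ⁻¹' Set.Icc a b : Set (EuclideanSpace ℝ (Fin d)))
      = WithLp.ofLp ⁻¹' Set.pi Set.univ (fun i => Set.Ioo (a i) (b i)) := by
  change interior (PiLp.homeomorph 2 _ ⁻¹' _) = _
  rw [← (PiLp.homeomorph 2 _).preimage_interior, ← Set.pi_univ_Icc,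
    interior_pi_set Set.finite_univ]
  simp only [interior_Icc]
  rfl

theorem mem_frontier_preimage_Icc {x : EuclideanSpace ℝ (Fin d)} (hx : x.ofLp ∈ Set.Icc a b)
    {i : Fin d} (hi : x i = a i ∨ x i = b i) :
    x ∈ frontier (WithLp.ofLp ⁻¹' Set.Icc a b) := by
  refine ⟨subset_closure hx, fun hint => ?_⟩
  rw [interior_preimage_Icc] at hint
  obtain ⟨hai, hib⟩ := hint i (Set.mem_univ i)
  rcases hi with h | h <;> simp [h] at hai hib

theorem setIntegral_trace_fderiv_eq_zero_of_frontier
    {F : EuclideanSpace ℝ (Fin d) → EuclideanSpace ℝ (Fin d)}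
    (hFc : ContinuousOn F (WithLp.ofLp ⁻¹' Set.Icc a b))
    (hFd : ∀ x ∈ interior (WithLp.ofLp ⁻¹' Set.Icc a b), DifferentiableAt ℝ F x)
    (hFi : IntegrableOn (fun x => LinearMap.trace ℝ _ (fderiv ℝ F x).toLinearMap)
      (WithLp.ofLp ⁻¹' Set.Icc a b))
    (hF0 : ∀ x ∈ frontier (WithLp.ofLp ⁻¹' Set.Icc a b), F x = 0) :
    ∫ x in WithLp.ofLp ⁻¹' Set.Icc a b, LinearMap.trace ℝ _ (fderiv ℝ F x).toLinearMap = 0 := by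
  cases d with
  | zero => simp [trace_eq_sum_apply_single]
  | succ n =>
    by_cases hab : a ≤ b
    swap
    · simp [Set.Icc_eq_empty hab]
    -- the coordinatewise order, for which the box is an `Icc`
    let _ : PartialOrder (EuclideanSpace ℝ (Fin (n + 1))) :=
      PartialOrder.lift WithLp.ofLp (WithLp.ofLp_injective 2)
    have hface : ∀ i, ∀ c ∈ ({a i, b i} : Set ℝ),
        ∀ y ∈ Set.Icc (a ∘ i.succAbove) (b ∘ i.succAbove),
          F (WithLp.toLp 2 (i.insertNth c y)) i = 0 := by
      intro i c hc y hy
      refine congrFun (congrArg WithLp.ofLp (hF0 _ (mem_frontier_preimage_Icc ?_ (i := i) ?_))) i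
      · exact Fin.insertNth_mem_Icc.2 ⟨by rcases hc with rfl | rfl <;> simp [hab i], hy⟩
      · simpa using hc
    have hdiv := integral_divergence_of_hasFDerivAt_off_countable_of_equiv
      (EuclideanSpace.equiv (Fin (n + 1)) ℝ) (fun _ _ => Iff.rfl)
      (EuclideanSpace.volume_preserving_symm_measurableEquiv_toLp (Fin (n + 1)))
      (fun i x => F x i) (fun i x => (EuclideanSpace.proj i).comp (fderiv ℝ F x)) ∅
      Set.countable_empty (WithLp.toLp 2 a) (WithLp.toLp 2 b) hab
      (fun i => (EuclideanSpace.proj i).continuous.comp_continuousOn hFc) ?_ _ ?_ hFi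
    · refine hdiv.trans (Finset.sum_eq_zero fun i _ => sub_eq_zero.2 ?_)
      exact (setIntegral_eq_zero_of_forall_eq_zero fun y hy => hface i (b i) (.inr rfl) y hy).trans
        (setIntegral_eq_zero_of_forall_eq_zero fun y hy => hface i (a i) (.inl rfl) y hy).symm
    · rintro x ⟨hx, -⟩ i
      exact (EuclideanSpace.proj i).hasFDerivAt.comp x (hFd x hx).hasFDerivAt
    · exact fun x => trace_eq_sum_apply_single _

end EuclideanSpace

theorem stein_identity_box_general
    (d : ℕ) (a b : Fin d → ℝ)
    (Ω : Set (EuclideanSpace ℝ (Fin d)))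
    (hΩ : Ω = {x : EuclideanSpace ℝ (Fin d) | ∀ i, a i ≤ x i ∧ x i ≤ b i})
    (V : Set (EuclideanSpace ℝ (Fin d))) (hV : IsOpen V) (hΩV : Ω ⊆ V)
    (p : EuclideanSpace ℝ (Fin d) → ℝ)
    (hp : ContDiffOn ℝ 1 p V)
    (hppos : ∀ x ∈ Ω, 0 < p x)
    (φ : EuclideanSpace ℝ (Fin d) → EuclideanSpace ℝ (Fin d))
    (hφ : ContDiffOn ℝ 1 φ V)
    (hbd : ∀ x ∈ frontier Ω, p x • φ x = 0) :
    ∫ x in Ω,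
      ((inner ℝ (gradient (fun y => Real.log (p y)) x) (φ x) : ℝ) +
        LinearMap.trace ℝ (EuclideanSpace ℝ (Fin d)) (fderiv ℝ φ x).toLinearMap) * p x
      = 0 := by
  replace hΩ : Ω = WithLp.ofLp ⁻¹' Set.Icc a b := by
    rw [hΩ]; ext x; simp [Pi.le_def, forall_and]
  have hΩc : IsCompact Ω := hΩ ▸ EuclideanSpace.isCompact_preimage_Icc
  have hVx : ∀ x ∈ Ω, V ∈ 𝓝 x := fun x hx => hV.mem_nhds (hΩV hx)
  have hpφ : ContDiffOn ℝ 1 (fun y => p y • φ y) V := hp.smul hφ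
  calc _ = ∫ x in Ω, LinearMap.trace ℝ _ (fderiv ℝ (fun y => p y • φ y) x).toLinearMap :=
      setIntegral_congr_fun hΩc.isClosed.measurableSet fun x hx =>
        stein_integrand_eq_trace_fderiv_smul
          ((hp.contDiffAt (hVx x hx)).differentiableAt one_ne_zero)
          ((hφ.contDiffAt (hVx x hx)).differentiableAt one_ne_zero) (hppos x hx).ne'
    _ = 0 := by
      subst hΩ
      refine EuclideanSpace.setIntegral_trace_fderiv_eq_zero_of_frontier
        (hpφ.continuousOn.mono hΩV) (fun x hx => ?_) ?_ hbd
      · exact (hpφ.contDiffAt (hVx x (interior_subset hx))).differentiableAt one_ne_zero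
      · exact (LinearMap.continuous_trace_toLinearMap.comp_continuousOn
          ((hpφ.continuousOn_fderiv_of_isOpen hV le_rfl).mono hΩV)).integrableOn_compact hΩc

/-- Stein's identity on a box: for `Ω = [a,b] ⊂ ℝ^d` with nonempty
interior, `p` a positive `C¹` density on a neighborhood of `Ω`, and `φ` a `C¹` vector
field with `p • φ` vanishing on the boundary of `Ω` (Stein class condition),
`∫_Ω (⟨∇ log p, φ⟩ + div φ) p = 0`, where `div φ x` is the trace of the Fréchet
derivative of `φ` at `x`. -/
theorem stein_identity_box
    (d : ℕ) (a b : Fin d → ℝ) (hab : ∀ i, a i < b i)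
    (Ω : Set (EuclideanSpace ℝ (Fin d)))
    (hΩ : Ω = {x : EuclideanSpace ℝ (Fin d) | ∀ i, a i ≤ x i ∧ x i ≤ b i})
    (V : Set (EuclideanSpace ℝ (Fin d))) (hV : IsOpen V) (hΩV : Ω ⊆ V)
    (p : EuclideanSpace ℝ (Fin d) → ℝ)
    (hp : ContDiffOn ℝ 1 p V)
    (hppos : ∀ x ∈ Ω, 0 < p x)
    (φ : EuclideanSpace ℝ (Fin d) → EuclideanSpace ℝ (Fin d))
    (hφ : ContDiffOn ℝ 1 φ V)
    (hbd : ∀ x ∈ frontier Ω, p x • φ x = 0) :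
    ∫ x in Ω,
      ((inner ℝ (gradient (fun y => Real.log (p y)) x) (φ x) : ℝ) +
        LinearMap.trace ℝ (EuclideanSpace ℝ (Fin d)) (fderiv ℝ φ x).toLinearMap) * p x
      = 0 :=
  stein_identity_box_general d a b Ω hΩ V hV hΩV p hp hppos φ hφ hbd
end
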